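/- arXiv:2603.27425 — 8 statements merged into one kernel-verified Lean document; each statement's English description precedes it below -/
import Mathlib

section
/- If the linear system x' = A(t)x has a uniform h-dichotomy on all of J = (a₀, +∞), then its only bounded solution on J is the trivial solution. -/
lemma aux_le_zero {a c α : ℝ} (hα : 0 < α)
    (hb : ∀ r ∈ Set.Ioc (0:ℝ) 1, a ≤ c * r ^ α) : a ≤ 0 := by
  have h2 : ContinuousAt (fun r : ℝ => r ^ α) 0 :=
    Real.continuousAt_rpow_const 0 α (Or.inr hα.le)
  have h3 := h2.tendsto.mono_left (nhdsWithin_le_nhds (s := Set.Ioi (0:ℝ)))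
  rw [Real.zero_rpow hα.ne'] at h3
  have h1 : Filter.Tendsto (fun r : ℝ => c * r ^ α)
      (nhdsWithin 0 (Set.Ioi 0)) (nhds 0) := by
    simpa using h3.const_mul c
  have h4 : ∀ᶠ r in nhdsWithin (0:ℝ) (Set.Ioi 0), a ≤ c * r ^ α := by
    filter_upwards [Ioc_mem_nhdsGT_of_mem
      (by norm_num : (0:ℝ) ∈ Set.Ico (0:ℝ) 1)] with r hr using hb r hr
  exact ge_of_tendsto h1 h4

/-- Lemma `FDIA`: if the linear system has a uniform
`h`-dichotomy on all of `J = (a₀,∞)`, then its only bounded solution on `J`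
is the trivial one. -/
theorem hdichotomy_on_J_no_bounded_solution
    (n : ℕ) (a₀ : EReal) (J : Set ℝ) (hJ : J = {t : ℝ | a₀ < (t : EReal)})
    (h : ℝ → ℝ) (hmono : StrictMonoOn h J)
    (hmaps : Set.MapsTo h J (Set.Ioi 0)) (hsurj : Set.SurjOn h J (Set.Ioi 0))
    (Φ : ℝ → ℝ → ((Fin n → ℝ) →L[ℝ] (Fin n → ℝ)))
    (hΦid : ∀ t ∈ J, Φ t t = 1)
    (hΦcoc : ∀ t ∈ J, ∀ s ∈ J, ∀ r ∈ J, (Φ t s).comp (Φ s r) = Φ t r)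
    (P : ℝ → ((Fin n → ℝ) →L[ℝ] (Fin n → ℝ)))
    (hP : ∀ t ∈ J, (P t).comp (P t) = P t)
    (hinvar : ∀ t ∈ J, ∀ s ∈ J, (P t).comp (Φ t s) = (Φ t s).comp (P s))
    (K α : ℝ) (hK : 1 ≤ K) (hα : 0 < α)
    (hest1 : ∀ t ∈ J, ∀ s ∈ J, s ≤ t →
      ‖(Φ t s).comp (P s)‖ ≤ K * (h t / h s) ^ (-α))
    (hest2 : ∀ t ∈ J, ∀ s ∈ J, t ≤ s →
      ‖(Φ t s).comp (1 - P s)‖ ≤ K * (h s / h t) ^ (-α))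
    (x : ℝ → (Fin n → ℝ))
    (hsol : ∀ t ∈ J, ∀ s ∈ J, x t = (Φ t s) (x s))
    (hbdd : ∃ C : ℝ, ∀ t ∈ J, ‖x t‖ ≤ C) :
    ∀ t ∈ J, x t = 0 := by
  obtain ⟨C, hC⟩ := hbdd
  intro t ht
  have hht : 0 < h t := hmaps ht
  have hC0 : 0 ≤ C := le_trans (norm_nonneg _) (hC t ht)
  -- stable part
  have key1 : (P t) (x t) = 0 := by
    have hb : ∀ r ∈ Set.Ioc (0:ℝ) 1, ‖(P t) (x t)‖ ≤ (K * C) * r ^ α := by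
      intro r hr
      obtain ⟨s, hs, hhs⟩ := hsurj (show r * h t ∈ Set.Ioi 0 from mul_pos hr.1 hht)
      have hhs' : 0 < h s := hmaps hs
      have hst : s ≤ t := (hmono.le_iff_le hs ht).mp (by rw [hhs]; nlinarith [hr.2])
      have heq : (P t) (x t) = ((Φ t s).comp (P s)) (x s) := by
        rw [hsol t ht s hs]
        calc (P t) ((Φ t s) (x s)) = ((P t).comp (Φ t s)) (x s) := rfl
          _ = ((Φ t s).comp (P s)) (x s) := by rw [hinvar t ht s hs]
      rw [heq]
      calc ‖((Φ t s).comp (P s)) (x s)‖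
          ≤ ‖(Φ t s).comp (P s)‖ * ‖x s‖ := ContinuousLinearMap.le_opNorm _ _
        _ ≤ (K * (h t / h s) ^ (-α)) * C := by
            apply mul_le_mul (hest1 t ht s hs hst) (hC s hs) (norm_nonneg _)
            have : (0:ℝ) < (h t / h s) ^ (-α) := Real.rpow_pos_of_pos (by positivity) _
            nlinarith
        _ = (K * C) * r ^ α := by
            rw [hhs, show h t / (r * h t) = r⁻¹ by
                rw [mul_comm, ← div_div, div_self hht.ne', one_div],
              Real.rpow_neg (inv_nonneg.mpr hr.1.le), Real.inv_rpow hr.1.le, inv_inv]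
            ring
    have := aux_le_zero hα hb
    exact norm_le_zero_iff.mp this
  -- unstable part
  have key2 : ((1 : (Fin n → ℝ) →L[ℝ] (Fin n → ℝ)) - P t) (x t) = 0 := by
    have hb : ∀ r ∈ Set.Ioc (0:ℝ) 1,
        ‖((1 : (Fin n → ℝ) →L[ℝ] (Fin n → ℝ)) - P t) (x t)‖ ≤ (K * C) * r ^ α := by
      intro r hr
      obtain ⟨s, hs, hhs⟩ := hsurj (show h t / r ∈ Set.Ioi 0 from div_pos hht hr.1)
      have hhs' : 0 < h s := hmaps hs
      have hst : t ≤ s := by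
        apply (hmono.le_iff_le ht hs).mp
        rw [hhs, le_div_iff₀ hr.1]
        nlinarith [hr.2]
      have hcomm : ((1 : (Fin n → ℝ) →L[ℝ] (Fin n → ℝ)) - P t).comp (Φ t s)
          = (Φ t s).comp (1 - P s) := by
        rw [ContinuousLinearMap.sub_comp, ContinuousLinearMap.comp_sub,
          ContinuousLinearMap.one_def, ContinuousLinearMap.id_comp,
          ContinuousLinearMap.comp_id, hinvar t ht s hs]
      have heq : ((1 : (Fin n → ℝ) →L[ℝ] (Fin n → ℝ)) - P t) (x t)
          = ((Φ t s).comp (1 - P s)) (x s) := by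
        rw [hsol t ht s hs]
        calc ((1 : (Fin n → ℝ) →L[ℝ] (Fin n → ℝ)) - P t) ((Φ t s) (x s))
            = (((1 : (Fin n → ℝ) →L[ℝ] (Fin n → ℝ)) - P t).comp (Φ t s)) (x s) := rfl
          _ = ((Φ t s).comp (1 - P s)) (x s) := by rw [hcomm]
      rw [heq]
      calc ‖((Φ t s).comp (1 - P s)) (x s)‖
          ≤ ‖(Φ t s).comp (1 - P s)‖ * ‖x s‖ := ContinuousLinearMap.le_opNorm _ _
        _ ≤ (K * (h s / h t) ^ (-α)) * C := by
            apply mul_le_mul (hest2 t ht s hs hst) (hC s hs) (norm_nonneg _)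
            have : (0:ℝ) < (h s / h t) ^ (-α) := Real.rpow_pos_of_pos (by positivity) _
            nlinarith
        _ = (K * C) * r ^ α := by
            rw [hhs, show (h t / r) / h t = r⁻¹ by
                rw [div_right_comm, div_self hht.ne', one_div],
              Real.rpow_neg (inv_nonneg.mpr hr.1.le), Real.inv_rpow hr.1.le, inv_inv]
            ring
    have := aux_le_zero hα hb
    exact norm_le_zero_iff.mp this
  have h2 : x t - (P t) (x t) = 0 := by
    simpa [ContinuousLinearMap.sub_apply] using key2
  rw [key1, sub_zero] at h2
  exact h2
end

section
/- Suppose x' = A(t)x has a uniform h-dichotomy on [e,+∞) (e = h⁻¹(1)) with projectors P⁺(s) and constants K, α. Then for every s ≥ e, the range of P⁺(s) equals the set of ξ ∈ ℝⁿ such that sup over t ≥ s of |Φ(t,s)ξ| is finite. -/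
/-- Lemma `ISF`: under a uniform `h`-dichotomy on `[e,∞)`
(`e = h⁻¹(1)`) with projector `P⁺`, the range of `P⁺(s)` is exactly the set
of initial values of forward-bounded solutions. -/
theorem hdichotomy_range_Pplus
    (n : ℕ) (a₀ : EReal) (J : Set ℝ) (hJ : J = {t : ℝ | a₀ < (t : EReal)})
    (h : ℝ → ℝ) (hmono : StrictMonoOn h J)
    (hmaps : Set.MapsTo h J (Set.Ioi 0)) (hsurj : Set.SurjOn h J (Set.Ioi 0))
    (Φ : ℝ → ℝ → ((Fin n → ℝ) →L[ℝ] (Fin n → ℝ)))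
    (hΦid : ∀ t ∈ J, Φ t t = 1)
    (hΦcoc : ∀ t ∈ J, ∀ s ∈ J, ∀ r ∈ J, (Φ t s).comp (Φ s r) = Φ t r)
    (e : ℝ) (heJ : e ∈ J) (hhe : h e = 1)
    (P : ℝ → ((Fin n → ℝ) →L[ℝ] (Fin n → ℝ)))
    (hP : ∀ t ∈ Set.Ici e, (P t).comp (P t) = P t)
    (hinvar : ∀ t ∈ Set.Ici e, ∀ s ∈ Set.Ici e, (P t).comp (Φ t s) = (Φ t s).comp (P s))
    (K α : ℝ) (hK : 1 ≤ K) (hα : 0 < α)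
    (hest1 : ∀ t ∈ Set.Ici e, ∀ s ∈ Set.Ici e, s ≤ t →
      ‖(Φ t s).comp (P s)‖ ≤ K * (h t / h s) ^ (-α))
    (hest2 : ∀ t ∈ Set.Ici e, ∀ s ∈ Set.Ici e, t ≤ s →
      ‖(Φ t s).comp (1 - P s)‖ ≤ K * (h s / h t) ^ (-α)) :
    ∀ s, e ≤ s →
      Set.range (P s) = {ξ : Fin n → ℝ | ∃ C : ℝ, ∀ t, s ≤ t → ‖(Φ t s) ξ‖ ≤ C} := by
  intro s hs
  have hJmem : ∀ t, e ≤ t → t ∈ J := by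
    intro t ht
    have he' : a₀ < (e : EReal) := by rw [hJ] at heJ; exact heJ
    rw [hJ]
    exact lt_of_lt_of_le he' (by exact_mod_cast ht)
  have hsJ : s ∈ J := hJmem s hs
  have hhs : 0 < h s := hmaps hsJ
  ext ξ
  simp only [Set.mem_range, Set.mem_setOf_eq]
  constructor
  · rintro ⟨η, rfl⟩
    refine ⟨K * ‖P s η‖, ?_⟩
    intro t ht
    have hte : e ≤ t := hs.trans ht
    have htJ : t ∈ J := hJmem t hte
    have hht : 0 < h t := hmaps htJ
    have hPP : P s (P s η) = P s η := DFunLike.congr_fun (hP s hs) η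
    have heq : Φ t s (P s η) = ((Φ t s).comp (P s)) (P s η) := by
      simp [ContinuousLinearMap.comp_apply, hPP]
    rw [heq]
    have h1 : (1 : ℝ) ≤ h t / h s := (one_le_div hhs).mpr (hmono.monotoneOn hsJ htJ ht)
    have h2 : (h t / h s) ^ (-α) ≤ 1 :=
      Real.rpow_le_one_of_one_le_of_nonpos h1 (by linarith)
    calc ‖((Φ t s).comp (P s)) (P s η)‖
        ≤ ‖(Φ t s).comp (P s)‖ * ‖P s η‖ := ContinuousLinearMap.le_opNorm _ _
      _ ≤ (K * (h t / h s) ^ (-α)) * ‖P s η‖ := by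
          gcongr
          exact hest1 t hte s hs ht
      _ = K * ((h t / h s) ^ (-α) * ‖P s η‖) := by ring
      _ ≤ K * (1 * ‖P s η‖) := by
          have hK0 : (0:ℝ) ≤ K := by linarith
          exact mul_le_mul_of_nonneg_left
            (mul_le_mul_of_nonneg_right h2 (norm_nonneg _)) hK0
      _ = K * ‖P s η‖ := by ring
  · rintro ⟨C, hC⟩
    have hCnn : 0 ≤ C := by
      have := hC s le_rfl
      rw [hΦid s hsJ] at this
      simpa using (norm_nonneg ξ).trans this
    have key : ∀ t, s ≤ t → ‖ξ - P s ξ‖ ≤ K * (h t / h s) ^ (-α) * C := by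
      intro t ht
      have hte : e ≤ t := hs.trans ht
      have htJ : t ∈ J := hJmem t hte
      have h1 : (P t).comp (Φ t s) = (Φ t s).comp (P s) := hinvar t hte s hs
      have h2 : (Φ s t).comp (Φ t s) = Φ s s := hΦcoc s hsJ t htJ s hsJ
      have e2 : ∀ w, Φ s t (Φ t s w) = w := by
        intro w
        have := DFunLike.congr_fun h2 w
        simpa [hΦid s hsJ] using this
      have e1 : P t (Φ t s ξ) = Φ t s (P s ξ) := DFunLike.congr_fun h1 ξ
      have hrep : ξ - P s ξ = ((Φ s t).comp (1 - P t)) (Φ t s ξ) := by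
        simp [ContinuousLinearMap.comp_apply, ContinuousLinearMap.sub_apply,
          ContinuousLinearMap.one_apply, e1, map_sub, e2]
      have hb : ‖(Φ s t).comp (1 - P t)‖ ≤ K * (h t / h s) ^ (-α) :=
        hest2 s hs t hte ht
      rw [hrep]
      calc ‖((Φ s t).comp (1 - P t)) (Φ t s ξ)‖
          ≤ ‖(Φ s t).comp (1 - P t)‖ * ‖Φ t s ξ‖ := ContinuousLinearMap.le_opNorm _ _
        _ ≤ (K * (h t / h s) ^ (-α)) * C :=
            mul_le_mul hb (hC t ht) (norm_nonneg _)
              (mul_nonneg (by linarith) (Real.rpow_nonneg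
                (div_nonneg (hmaps htJ).le hhs.le) _))
    have hz : ξ - P s ξ = 0 := by
      rw [← norm_eq_zero]
      have hle : ‖ξ - P s ξ‖ ≤ 0 := by
        refine le_of_forall_pos_le_add ?_
        intro ε hε
        set C' : ℝ := max C 1 with hC'def
        have hC' : (0 : ℝ) < C' := lt_of_lt_of_le one_pos (le_max_right _ _)
        have hK0 : (0 : ℝ) < K := lt_of_lt_of_le one_pos hK
        have hKC' : (0 : ℝ) < K * C' := mul_pos hK0 hC'
        set r : ℝ := (K * C' / ε) ^ (α⁻¹) with hrdef
        have hr : 0 < r := Real.rpow_pos_of_pos (by positivity) _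
        set y : ℝ := h s * r with hydef
        have hy : 0 < y := mul_pos hhs hr
        set Y : ℝ := max y (h s + 1) with hYdef
        have hYpos : 0 < Y := lt_of_lt_of_le hy (le_max_left _ _)
        obtain ⟨t, htJ, hht⟩ := hsurj (Set.mem_Ioi.mpr hYpos)
        have hhtpos : 0 < h t := hmaps htJ
        have hst : s ≤ t := by
          by_contra hle'
          push_neg at hle'
          have : h t < h s := hmono htJ hsJ hle'
          have : h s + 1 ≤ h t := hht ▸ le_max_right _ _
          linarith
        have hyt : y ≤ h t := hht ▸ le_max_left _ _
        have hkey := key t hst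
        -- bound the rpow term
        have hneg : (h t / h s) ^ (-α) = (h s / h t) ^ α := by
          rw [Real.rpow_neg (div_nonneg hhtpos.le hhs.le),
            ← Real.inv_rpow (div_nonneg hhtpos.le hhs.le), inv_div]
        have hdivle : h s / h t ≤ h s / y := by gcongr
        have hsy : h s / y = (ε / (K * C')) ^ (α⁻¹) := by
          rw [hydef]
          rw [div_mul_eq_div_div, div_self hhs.ne', one_div, hrdef,
            ← Real.inv_rpow (by positivity), inv_div]
        have hpow : (h s / h t) ^ α ≤ ε / (K * C') := by
          calc (h s / h t) ^ α ≤ (h s / y) ^ α :=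
                Real.rpow_le_rpow (div_nonneg hhs.le hhtpos.le) hdivle hα.le
            _ = ((ε / (K * C')) ^ (α⁻¹)) ^ α := by rw [hsy]
            _ = (ε / (K * C')) ^ (α⁻¹ * α) := by
                rw [← Real.rpow_mul (by positivity)]
            _ = ε / (K * C') := by
                rw [inv_mul_cancel₀ hα.ne', Real.rpow_one]
        have hfinal : K * (h t / h s) ^ (-α) * C ≤ ε := by
          rw [hneg]
          have hCC' : C ≤ C' := le_max_left _ _
          have hnn : 0 ≤ (h s / h t) ^ α :=
            Real.rpow_nonneg (div_nonneg hhs.le hhtpos.le) _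
          calc K * (h s / h t) ^ α * C ≤ K * (ε / (K * C')) * C' := by
                have h1 : K * (h s / h t) ^ α * C ≤ K * (ε / (K * C')) * C := by
                  gcongr
                have h2 : K * (ε / (K * C')) * C ≤ K * (ε / (K * C')) * C' := by
                  gcongr
                linarith
            _ = ε := by field_simp
        linarith [hkey.trans hfinal]
      linarith [norm_nonneg (ξ - P s ξ)]
    exact ⟨ξ, by rwa [sub_eq_zero, eq_comm] at hz⟩
end

section
/- Suppose x' = A(t)x has a uniform h-dichotomy on (a₀, e] (e = h⁻¹(1)) with projectors P⁻(s) and constants K, α. Then for every s ∈ (a₀, e], the kernel of P⁻(s) equals the set of ξ ∈ ℝⁿ such that sup over a₀ < t ≤ s of |Φ(t,s)ξ| is finite. -/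
/-- Lemma `ISB`: under a uniform `h`-dichotomy on `(a₀,e]`
(`e = h⁻¹(1)`) with projector `P⁻`, the kernel of `P⁻(s)` is exactly the set
of initial values of backward-bounded solutions. -/
theorem hdichotomy_kernel_Pminus
    (n : ℕ) (a₀ : EReal) (J : Set ℝ) (hJ : J = {t : ℝ | a₀ < (t : EReal)})
    (h : ℝ → ℝ) (hmono : StrictMonoOn h J)
    (hmaps : Set.MapsTo h J (Set.Ioi 0)) (hsurj : Set.SurjOn h J (Set.Ioi 0))
    (Φ : ℝ → ℝ → ((Fin n → ℝ) →L[ℝ] (Fin n → ℝ)))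
    (hΦid : ∀ t ∈ J, Φ t t = 1)
    (hΦcoc : ∀ t ∈ J, ∀ s ∈ J, ∀ r ∈ J, (Φ t s).comp (Φ s r) = Φ t r)
    (e : ℝ) (heJ : e ∈ J) (hhe : h e = 1)
    (P : ℝ → ((Fin n → ℝ) →L[ℝ] (Fin n → ℝ)))
    (hP : ∀ t ∈ {u ∈ J | u ≤ e}, (P t).comp (P t) = P t)
    (hinvar : ∀ t ∈ {u ∈ J | u ≤ e}, ∀ s ∈ {u ∈ J | u ≤ e},
      (P t).comp (Φ t s) = (Φ t s).comp (P s))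
    (K α : ℝ) (hK : 1 ≤ K) (hα : 0 < α)
    (hest1 : ∀ t ∈ {u ∈ J | u ≤ e}, ∀ s ∈ {u ∈ J | u ≤ e}, s ≤ t →
      ‖(Φ t s).comp (P s)‖ ≤ K * (h t / h s) ^ (-α))
    (hest2 : ∀ t ∈ {u ∈ J | u ≤ e}, ∀ s ∈ {u ∈ J | u ≤ e}, t ≤ s →
      ‖(Φ t s).comp (1 - P s)‖ ≤ K * (h s / h t) ^ (-α)) :
    ∀ s ∈ J, s ≤ e →
      {ξ : Fin n → ℝ | (P s) ξ = 0} =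
        {ξ : Fin n → ℝ | ∃ C : ℝ, ∀ t ∈ J, t ≤ s → ‖(Φ t s) ξ‖ ≤ C} := by
  intro s hsJ hse
  have hsS : s ∈ {u ∈ J | u ≤ e} := ⟨hsJ, hse⟩
  have hhs : (0:ℝ) < h s := hmaps hsJ
  ext ξ
  simp only [Set.mem_setOf_eq]
  constructor
  · -- kernel → bounded
    intro hker
    refine ⟨K * ‖ξ‖, fun t htJ hts => ?_⟩
    have htS : t ∈ {u ∈ J | u ≤ e} := ⟨htJ, hts.trans hse⟩
    have hht : (0:ℝ) < h t := hmaps htJ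
    have hxi : (1 - P s) ξ = ξ := by
      simp [ContinuousLinearMap.sub_apply, hker]
    have h1 : ‖(Φ t s) ξ‖ = ‖((Φ t s).comp (1 - P s)) ξ‖ := by
      rw [ContinuousLinearMap.comp_apply, hxi]
    have hle : h t ≤ h s := hmono.monotoneOn htJ hsJ hts
    have h1le : (1:ℝ) ≤ h s / h t := (one_le_div hht).mpr hle
    have hpow : (h s / h t) ^ (-α) ≤ 1 :=
      Real.rpow_le_one_of_one_le_of_nonpos h1le (by linarith)
    calc ‖(Φ t s) ξ‖ = ‖((Φ t s).comp (1 - P s)) ξ‖ := h1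
      _ ≤ ‖(Φ t s).comp (1 - P s)‖ * ‖ξ‖ := ContinuousLinearMap.le_opNorm _ _
      _ ≤ (K * (h s / h t) ^ (-α)) * ‖ξ‖ := by
          gcongr
          exact hest2 t htS s hsS hts
      _ ≤ K * 1 * ‖ξ‖ := by
          have hK0 : (0:ℝ) ≤ K := by linarith
          gcongr
      _ = K * ‖ξ‖ := by ring
  · -- bounded → kernel
    rintro ⟨C, hC⟩
    have hC0 : 0 ≤ C := by
      have := hC s hsJ le_rfl
      rw [hΦid s hsJ] at this
      simpa using (norm_nonneg ξ).trans this
    have hKpos : (0:ℝ) < K := lt_of_lt_of_le one_pos hK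
    set B : ℝ := K * (C + 1) with hB
    have hBpos : 0 < B := by positivity
    have key : ∀ δ : ℝ, 0 < δ → ‖(P s) ξ‖ ≤ δ := by
      intro δ hδ
      set ε : ℝ := min (h s) (h s * (δ / B) ^ (1/α)) with hε
      have hεpos : 0 < ε := lt_min hhs (by positivity)
      obtain ⟨t, htJ, hht⟩ := hsurj (Set.mem_Ioi.mpr hεpos)
      have hhtpos : (0:ℝ) < h t := hmaps htJ
      have hhts : h t ≤ h s := hht ▸ min_le_left _ _
      have hts : t ≤ s := by
        by_contra hlt
        push_neg at hlt
        exact absurd (hmono hsJ htJ hlt) (not_lt.mpr hhts)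
      have htS : t ∈ {u ∈ J | u ≤ e} := ⟨htJ, hts.trans hse⟩
      have hinv := hinvar t htS s hsS
      have hrep : ((Φ s t).comp (P t)) ((Φ t s) ξ) = (P s) ξ := by
        have h1 : (P t) ((Φ t s) ξ) = (Φ t s) ((P s) ξ) := by
          have := congrArg (fun L : (Fin n → ℝ) →L[ℝ] (Fin n → ℝ) => L ξ) hinv
          simpa using this
        rw [ContinuousLinearMap.comp_apply, h1]
        have h2 : (Φ s t) ((Φ t s) ((P s) ξ)) = ((Φ s t).comp (Φ t s)) ((P s) ξ) := rfl
        rw [h2, hΦcoc s hsJ t htJ s hsJ, hΦid s hsJ]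
        simp
      have hop : ‖(Φ s t).comp (P t)‖ ≤ K * (h s / h t) ^ (-α) :=
        hest1 s hsS t htS hts
      have hpow_eq : (h s / h t) ^ (-α) = (h t / h s) ^ α := by
        rw [Real.rpow_neg (by positivity), ← Real.inv_rpow (by positivity), inv_div]
      have hεle : h t ≤ h s * (δ / B) ^ (1/α) := hht ▸ min_le_right _ _
      have hratio : h t / h s ≤ (δ / B) ^ (1/α) := by
        rw [div_le_iff₀ hhs]
        linarith [hεle]
      have hpow_le : (h t / h s) ^ α ≤ δ / B := by
        calc (h t / h s) ^ α ≤ ((δ / B) ^ (1/α)) ^ α :=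
              Real.rpow_le_rpow (by positivity) hratio hα.le
          _ = δ / B := by
              rw [← Real.rpow_mul (by positivity), one_div, inv_mul_cancel₀ hα.ne',
                Real.rpow_one]
      calc ‖(P s) ξ‖ = ‖((Φ s t).comp (P t)) ((Φ t s) ξ)‖ := by rw [hrep]
        _ ≤ ‖(Φ s t).comp (P t)‖ * ‖(Φ t s) ξ‖ := ContinuousLinearMap.le_opNorm _ _
        _ ≤ (K * (h s / h t) ^ (-α)) * C :=
            mul_le_mul hop (hC t htJ hts) (norm_nonneg _) (by positivity)
        _ = K * ((h t / h s) ^ α) * C := by rw [hpow_eq]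
        _ ≤ K * (δ / B) * C := by gcongr
        _ ≤ δ := by
            rw [hB]
            have heq : K * (δ / (K * (C + 1))) * C = δ * (K * C) / (K * (C + 1)) := by
              field_simp
            rw [heq, div_le_iff₀ (by positivity)]
            nlinarith [mul_pos hδ hKpos]
    have h0 : ‖(P s) ξ‖ ≤ 0 :=
      le_of_forall_pos_le_add (fun δ hδ => by simpa using key δ hδ)
    exact norm_le_zero_iff.mp h0
end

section
/- Suppose x' = A(t)x has uniform h-dichotomies on [e,∞) and on (a₀,e] with common constants K ≥ 1, α > 0, and its only bounded solution is trivial. Then the system is h-expansive on J: there exist constants L > 0 and β > 0 such that for every solution x and every [a,b] ⊂ J and a ≤ t ≤ b, |x(t)| ≤ L{ (h(t)/h(a))^{-β} |x(a)| + (h(b)/h(t))^{-β} |x(b)| }. -/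
/-- Auxiliary: on a set `S ⊆ J` where a dichotomy estimate holds, every solution
satisfies the two-sided bound. -/
lemma hexp_key {n : ℕ} {J : Set ℝ} {h : ℝ → ℝ}
    {Φ : ℝ → ℝ → ((Fin n → ℝ) →L[ℝ] (Fin n → ℝ))}
    {P : ℝ → ((Fin n → ℝ) →L[ℝ] (Fin n → ℝ))}
    (hinvar : ∀ t ∈ J, ∀ s ∈ J, (P t).comp (Φ t s) = (Φ t s).comp (P s))
    {K α : ℝ} {S : Set ℝ} (hSJ : S ⊆ J)
    (hest1 : ∀ t ∈ S, ∀ s ∈ S, s ≤ t → ‖(Φ t s).comp (P s)‖ ≤ K * (h t / h s) ^ (-α))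
    (hest2 : ∀ t ∈ S, ∀ s ∈ S, t ≤ s → ‖(Φ t s).comp (1 - P s)‖ ≤ K * (h s / h t) ^ (-α))
    (x : ℝ → (Fin n → ℝ))
    (hsol : ∀ t ∈ J, ∀ s ∈ J, x t = (Φ t s) (x s))
    {a t b : ℝ} (ha : a ∈ S) (ht : t ∈ S) (hb : b ∈ S)
    (hat : a ≤ t) (htb : t ≤ b) :
    ‖x t‖ ≤ K * (h t / h a) ^ (-α) * ‖x a‖ + K * (h b / h t) ^ (-α) * ‖x b‖ := by
  have ha' := hSJ ha
  have ht' := hSJ ht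
  have hb' := hSJ hb
  have h1 : P t (x t) = ((Φ t a).comp (P a)) (x a) := by
    rw [hsol t ht' a ha']
    have := congrArg (fun f : (Fin n → ℝ) →L[ℝ] (Fin n → ℝ) => f (x a)) (hinvar t ht' a ha')
    simpa using this
  have h2 : x t - P t (x t) = ((Φ t b).comp (1 - P b)) (x b) := by
    rw [hsol t ht' b hb']
    have := congrArg (fun f : (Fin n → ℝ) →L[ℝ] (Fin n → ℝ) => f (x b)) (hinvar t ht' b hb')
    simp [ContinuousLinearMap.comp_apply, ContinuousLinearMap.sub_apply,
      ContinuousLinearMap.one_apply, map_sub] at this ⊢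
    rw [← this]
  have hx : x t = P t (x t) + (x t - P t (x t)) := by abel
  calc ‖x t‖ = ‖P t (x t) + (x t - P t (x t))‖ := by rw [← hx]
    _ ≤ ‖P t (x t)‖ + ‖x t - P t (x t)‖ := norm_add_le _ _
    _ ≤ K * (h t / h a) ^ (-α) * ‖x a‖ + K * (h b / h t) ^ (-α) * ‖x b‖ := by
        apply add_le_add
        · rw [h1]
          calc ‖((Φ t a).comp (P a)) (x a)‖ ≤ ‖(Φ t a).comp (P a)‖ * ‖x a‖ :=
                ContinuousLinearMap.le_opNorm _ _
            _ ≤ K * (h t / h a) ^ (-α) * ‖x a‖ :=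
                mul_le_mul_of_nonneg_right (hest1 t ht a ha hat) (norm_nonneg _)
        · rw [h2]
          calc ‖((Φ t b).comp (1 - P b)) (x b)‖ ≤ ‖(Φ t b).comp (1 - P b)‖ * ‖x b‖ :=
                ContinuousLinearMap.le_opNorm _ _
            _ ≤ K * (h b / h t) ^ (-α) * ‖x b‖ :=
                mul_le_mul_of_nonneg_right (hest2 t ht b hb htb) (norm_nonneg _)

/-- Auxiliary: if the kernel of the pair `(Q, R)` is trivial, then the identity
is bounded by the pair, in finite dimensions. -/
lemma hexp_const {n : ℕ} (Q R : (Fin n → ℝ) →L[ℝ] (Fin n → ℝ))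
    (hinj : ∀ v, Q v = 0 → R v = 0 → v = 0) :
    ∃ c : ℝ, 1 ≤ c ∧ ∀ v, ‖v‖ ≤ c * (‖Q v‖ + ‖R v‖) := by
  set T : (Fin n → ℝ) →ₗ[ℝ] (Fin n → ℝ) × (Fin n → ℝ) :=
    LinearMap.prod Q.toLinearMap R.toLinearMap with hT
  have hTinj : Function.Injective T := by
    rw [← LinearMap.ker_eq_bot, LinearMap.ker_eq_bot']
    intro v hv
    have h1 : Q v = 0 := congrArg Prod.fst hv
    have h2 : R v = 0 := congrArg Prod.snd hv
    exact hinj v h1 h2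
  let E := LinearEquiv.ofInjective T hTinj
  let g := LinearMap.toContinuousLinearMap E.symm.toLinearMap
  refine ⟨‖g‖ + 1, by have := norm_nonneg g; linarith, fun v => ?_⟩
  have hv : v = g (E v) := (E.symm_apply_apply v).symm
  have h1 : ‖v‖ ≤ ‖g‖ * ‖E v‖ := by
    conv_lhs => rw [hv]
    exact g.le_opNorm _
  have h2 : ‖E v‖ = max ‖Q v‖ ‖R v‖ := by
    have : ((E v : (Fin n → ℝ) × (Fin n → ℝ))) = (Q v, R v) := rfl
    rw [show ‖E v‖ = ‖(E v : (Fin n → ℝ) × (Fin n → ℝ))‖ from rfl, this, Prod.norm_def]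
  have h3 : max ‖Q v‖ ‖R v‖ ≤ ‖Q v‖ + ‖R v‖ :=
    max_le (le_add_of_nonneg_right (norm_nonneg _)) (le_add_of_nonneg_left (norm_nonneg _))
  calc ‖v‖ ≤ ‖g‖ * ‖E v‖ := h1
    _ = ‖g‖ * max ‖Q v‖ ‖R v‖ := by rw [h2]
    _ ≤ (‖g‖ + 1) * (‖Q v‖ + ‖R v‖) := by
        apply mul_le_mul (by linarith [norm_nonneg g]) h3
          (le_max_left _ _ |>.trans' (norm_nonneg _)) (by positivity)

set_option maxHeartbeats 1000000

/-- Lemma `Lem-hexpanvar`: uniform `h`-dichotomies on both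
half-lines with common constants `K ≥ 1`, `α > 0`, together with the
triviality of bounded solutions, imply `h`-expansiveness on all of `J`. -/
theorem hdichotomies_imply_h_expansive
    (n : ℕ) (a₀ : EReal) (J : Set ℝ) (hJ : J = {t : ℝ | a₀ < (t : EReal)})
    (h : ℝ → ℝ) (hmono : StrictMonoOn h J)
    (hmaps : Set.MapsTo h J (Set.Ioi 0)) (hsurj : Set.SurjOn h J (Set.Ioi 0))
    (Φ : ℝ → ℝ → ((Fin n → ℝ) →L[ℝ] (Fin n → ℝ)))
    (hΦid : ∀ t ∈ J, Φ t t = 1)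
    (hΦcoc : ∀ t ∈ J, ∀ s ∈ J, ∀ r ∈ J, (Φ t s).comp (Φ s r) = Φ t r)
    (e : ℝ) (heJ : e ∈ J) (hhe : h e = 1)
    (Pp Pm : ℝ → ((Fin n → ℝ) →L[ℝ] (Fin n → ℝ)))
    (hPp : ∀ t ∈ J, (Pp t).comp (Pp t) = Pp t)
    (hPm : ∀ t ∈ J, (Pm t).comp (Pm t) = Pm t)
    (hinvarp : ∀ t ∈ J, ∀ s ∈ J, (Pp t).comp (Φ t s) = (Φ t s).comp (Pp s))
    (hinvarm : ∀ t ∈ J, ∀ s ∈ J, (Pm t).comp (Φ t s) = (Φ t s).comp (Pm s))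
    (K α : ℝ) (hK : 1 ≤ K) (hα : 0 < α)
    (hestp1 : ∀ t ∈ Set.Ici e, ∀ s ∈ Set.Ici e, s ≤ t →
      ‖(Φ t s).comp (Pp s)‖ ≤ K * (h t / h s) ^ (-α))
    (hestp2 : ∀ t ∈ Set.Ici e, ∀ s ∈ Set.Ici e, t ≤ s →
      ‖(Φ t s).comp (1 - Pp s)‖ ≤ K * (h s / h t) ^ (-α))
    (hestm1 : ∀ t ∈ {u ∈ J | u ≤ e}, ∀ s ∈ {u ∈ J | u ≤ e}, s ≤ t →
      ‖(Φ t s).comp (Pm s)‖ ≤ K * (h t / h s) ^ (-α))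
    (hestm2 : ∀ t ∈ {u ∈ J | u ≤ e}, ∀ s ∈ {u ∈ J | u ≤ e}, t ≤ s →
      ‖(Φ t s).comp (1 - Pm s)‖ ≤ K * (h s / h t) ^ (-α))
    (hnb : ∀ x : ℝ → (Fin n → ℝ),
        (∀ t ∈ J, ∀ s ∈ J, x t = (Φ t s) (x s)) →
        (∃ C : ℝ, ∀ t ∈ J, ‖x t‖ ≤ C) →
        ∀ t ∈ J, x t = 0) :
    ∃ L : ℝ, 0 < L ∧ ∃ β : ℝ, 0 < β ∧
      ∀ x : ℝ → (Fin n → ℝ),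
        (∀ t ∈ J, ∀ s ∈ J, x t = (Φ t s) (x s)) →
        ∀ a ∈ J, ∀ b ∈ J, a ≤ b → ∀ t, a ≤ t → t ≤ b →
          ‖x t‖ ≤ L * ((h t / h a) ^ (-β) * ‖x a‖ + (h b / h t) ^ (-β) * ‖x b‖) := by
  -- basic facts
  have hK0 : (0:ℝ) < K := lt_of_lt_of_le one_pos hK
  have hJup : ∀ {a t : ℝ}, a ∈ J → a ≤ t → t ∈ J := by
    intro a t ha hat
    rw [hJ] at ha ⊢
    exact lt_of_lt_of_le ha (EReal.coe_le_coe_iff.2 hat)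
  have hpos : ∀ u ∈ J, 0 < h u := fun u hu => hmaps hu
  have hm : ∀ s ∈ J, ∀ t ∈ J, s ≤ t → h s ≤ h t :=
    fun s hs t ht hst => hmono.monotoneOn hs ht hst
  have hSpJ : Set.Ici e ⊆ J := fun u hu => hJup heJ hu
  have hSmJ : {u ∈ J | u ≤ e} ⊆ J := fun u hu => hu.1
  -- rpow helpers
  have rnn : ∀ y : ℝ, 0 ≤ y → 0 ≤ y ^ (-α) := fun y hy => Real.rpow_nonneg hy _
  have rle1 : ∀ y : ℝ, 1 ≤ y → y ^ (-α) ≤ 1 :=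
    fun y hy => Real.rpow_le_one_of_one_le_of_nonpos hy (by linarith)
  have ranti : ∀ y z : ℝ, 0 < y → y ≤ z → z ^ (-α) ≤ y ^ (-α) :=
    fun y z hy hyz => Real.rpow_le_rpow_of_nonpos hy hyz (by linarith)
  have rmul : ∀ y z : ℝ, 0 ≤ y → 0 ≤ z → (y * z) ^ (-α) = y ^ (-α) * z ^ (-α) :=
    fun y z hy hz => Real.mul_rpow hy hz
  -- triviality of bounded solutions gives injectivity at `e`
  have hinj : ∀ v : Fin n → ℝ, Pm e v = 0 → (1 - Pp e) v = 0 → v = 0 := by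
    intro v h1 h2
    have hPpv : Pp e v = v := by
      have : v - Pp e v = 0 := by simpa using h2
      have := sub_eq_zero.mp this
      exact this.symm
    have hPmv : (1 - Pm e) v = v := by
      simp [ContinuousLinearMap.sub_apply, h1]
    set x : ℝ → (Fin n → ℝ) := fun t => Φ t e v with hxdef
    have hsol : ∀ t ∈ J, ∀ s ∈ J, x t = Φ t s (x s) := by
      intro t htJ s hsJ
      have := congrArg (fun f : (Fin n → ℝ) →L[ℝ] (Fin n → ℝ) => f v)
        (hΦcoc t htJ s hsJ e heJ)
      simpa [x] using this.symm
    have hbd : ∀ t ∈ J, ‖x t‖ ≤ K * ‖v‖ := by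
      intro t htJ
      rcases le_total e t with hte | hte
      · have hx : x t = ((Φ t e).comp (Pp e)) v := by
          simp [x, ContinuousLinearMap.comp_apply, hPpv]
        rw [hx]
        have hb1 : ‖((Φ t e).comp (Pp e)) v‖ ≤ ‖(Φ t e).comp (Pp e)‖ * ‖v‖ :=
          ContinuousLinearMap.le_opNorm _ _
        have hb2 : ‖(Φ t e).comp (Pp e)‖ ≤ K * (h t / h e) ^ (-α) :=
          hestp1 t (Set.mem_Ici.2 hte) e Set.self_mem_Ici hte
        have hb3 : (h t / h e) ^ (-α) ≤ 1 :=
          rle1 _ ((one_le_div (hpos e heJ)).2 (hm e heJ t htJ hte))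
        calc ‖((Φ t e).comp (Pp e)) v‖ ≤ ‖(Φ t e).comp (Pp e)‖ * ‖v‖ := hb1
          _ ≤ (K * (h t / h e) ^ (-α)) * ‖v‖ :=
              mul_le_mul_of_nonneg_right hb2 (norm_nonneg v)
          _ ≤ K * ‖v‖ := by
              refine mul_le_mul_of_nonneg_right ?_ (norm_nonneg v)
              calc K * (h t / h e) ^ (-α) ≤ K * 1 :=
                    mul_le_mul_of_nonneg_left hb3 hK0.le
                _ = K := mul_one K
      · have hx : x t = ((Φ t e).comp (1 - Pm e)) v := by
          simp [x, ContinuousLinearMap.comp_apply, ContinuousLinearMap.sub_apply, h1]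
        rw [hx]
        have hb1 : ‖((Φ t e).comp (1 - Pm e)) v‖ ≤ ‖(Φ t e).comp (1 - Pm e)‖ * ‖v‖ :=
          ContinuousLinearMap.le_opNorm _ _
        have hb2 : ‖(Φ t e).comp (1 - Pm e)‖ ≤ K * (h e / h t) ^ (-α) :=
          hestm2 t ⟨htJ, hte⟩ e ⟨heJ, le_rfl⟩ hte
        have hb3 : (h e / h t) ^ (-α) ≤ 1 :=
          rle1 _ ((one_le_div (hpos t htJ)).2 (hm t htJ e heJ hte))
        calc ‖((Φ t e).comp (1 - Pm e)) v‖ ≤ ‖(Φ t e).comp (1 - Pm e)‖ * ‖v‖ := hb1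
          _ ≤ (K * (h e / h t) ^ (-α)) * ‖v‖ :=
              mul_le_mul_of_nonneg_right hb2 (norm_nonneg v)
          _ ≤ K * ‖v‖ := by
              refine mul_le_mul_of_nonneg_right ?_ (norm_nonneg v)
              calc K * (h e / h t) ^ (-α) ≤ K * 1 :=
                    mul_le_mul_of_nonneg_left hb3 hK0.le
                _ = K := mul_one K
    have := hnb x hsol ⟨K * ‖v‖, hbd⟩ e heJ
    simpa [x, hΦid e heJ] using this
  obtain ⟨c, hc1, hc⟩ := hexp_const (Pm e) (1 - Pp e) hinj
  have hc0 : (0:ℝ) < c := lt_of_lt_of_le one_pos hc1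
  refine ⟨c * K * K + K, by nlinarith [mul_pos (mul_pos hc0 hK0) hK0], α, hα, ?_⟩
  intro x hsol a haJ b hbJ hab t hat htb
  have htJ : t ∈ J := hJup haJ hat
  have hpa := hpos a haJ
  have hpt := hpos t htJ
  have hpb := hpos b hbJ
  have hpe := hpos e heJ
  -- the bound at `e` in the mixed case
  have hce : a ≤ e → e ≤ b →
      ‖x e‖ ≤ c * (K * (h e / h a) ^ (-α) * ‖x a‖ + K * (h b / h e) ^ (-α) * ‖x b‖) := by
    intro hae heb
    have h1 : Pm e (x e) = ((Φ e a).comp (Pm a)) (x a) := by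
      rw [hsol e heJ a haJ]
      have := congrArg (fun f : (Fin n → ℝ) →L[ℝ] (Fin n → ℝ) => f (x a))
        (hinvarm e heJ a haJ)
      simpa using this
    have h2 : (1 - Pp e) (x e) = ((Φ e b).comp (1 - Pp b)) (x b) := by
      rw [hsol e heJ b hbJ]
      have := congrArg (fun f : (Fin n → ℝ) →L[ℝ] (Fin n → ℝ) => f (x b))
        (hinvarp e heJ b hbJ)
      simp [ContinuousLinearMap.comp_apply, ContinuousLinearMap.sub_apply,
        ContinuousLinearMap.one_apply, map_sub] at this ⊢
      rw [← this]
    have b1 : ‖Pm e (x e)‖ ≤ K * (h e / h a) ^ (-α) * ‖x a‖ := by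
      rw [h1]
      calc ‖((Φ e a).comp (Pm a)) (x a)‖ ≤ ‖(Φ e a).comp (Pm a)‖ * ‖x a‖ :=
            ContinuousLinearMap.le_opNorm _ _
        _ ≤ K * (h e / h a) ^ (-α) * ‖x a‖ :=
            mul_le_mul_of_nonneg_right
              (hestm1 e ⟨heJ, le_rfl⟩ a ⟨haJ, hae⟩ hae) (norm_nonneg _)
    have b2 : ‖(1 - Pp e) (x e)‖ ≤ K * (h b / h e) ^ (-α) * ‖x b‖ := by
      rw [h2]
      calc ‖((Φ e b).comp (1 - Pp b)) (x b)‖ ≤ ‖(Φ e b).comp (1 - Pp b)‖ * ‖x b‖ :=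
            ContinuousLinearMap.le_opNorm _ _
        _ ≤ K * (h b / h e) ^ (-α) * ‖x b‖ :=
            mul_le_mul_of_nonneg_right (hestp2 e Set.self_mem_Ici b (Set.mem_Ici.2 heb) heb) (norm_nonneg _)
    calc ‖x e‖ ≤ c * (‖Pm e (x e)‖ + ‖(1 - Pp e) (x e)‖) := hc (x e)
      _ ≤ c * (K * (h e / h a) ^ (-α) * ‖x a‖ + K * (h b / h e) ^ (-α) * ‖x b‖) :=
          mul_le_mul_of_nonneg_left (add_le_add b1 b2) (le_of_lt hc0)
  have hDnn : 0 ≤ (h t / h a) ^ (-α) := rnn _ (le_of_lt (div_pos hpt hpa))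
  have hA2nn : 0 ≤ (h b / h t) ^ (-α) := rnn _ (le_of_lt (div_pos hpb hpt))
  have hXnn : 0 ≤ (h t / h a) ^ (-α) * ‖x a‖ := mul_nonneg hDnn (norm_nonneg _)
  have hYnn : 0 ≤ (h b / h t) ^ (-α) * ‖x b‖ := mul_nonneg hA2nn (norm_nonneg _)
  rcases le_total e a with hea | hae
  · -- whole interval in [e, ∞)
    have hkey := hexp_key hinvarp hSpJ hestp1 hestp2 x hsol
      (a := a) (t := t) (b := b) (Set.mem_Ici.2 hea) (Set.mem_Ici.2 (hea.trans hat))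
      (Set.mem_Ici.2 (hea.trans (hat.trans htb))) hat htb
    have hcKK : (0:ℝ) ≤ c * K * K := by positivity
    linarith [hkey, mul_nonneg hcKK hXnn, mul_nonneg hcKK hYnn]
  · rcases le_total b e with hbe | heb
    · -- whole interval in (a₀, e]
      have hkey := hexp_key hinvarm hSmJ hestm1 hestm2 x hsol
        (a := a) (t := t) (b := b) ⟨haJ, hat.trans (htb.trans hbe)⟩
        ⟨htJ, htb.trans hbe⟩ ⟨hbJ, hbe⟩ hat htb
      have hcKK : (0:ℝ) ≤ c * K * K := by positivity
      linarith [hkey, mul_nonneg hcKK hXnn, mul_nonneg hcKK hYnn]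
    · have hne := hce hae heb
      rcases le_total e t with het | hte
      · -- mixed case, t ≥ e
        have hkey := hexp_key hinvarp hSpJ hestp1 hestp2 x hsol
          (a := e) (t := t) (b := b) Set.self_mem_Ici (Set.mem_Ici.2 het)
          (Set.mem_Ici.2 (het.trans htb)) het htb
        set A1 := (h t / h e) ^ (-α) with hA1def
        set A2 := (h b / h t) ^ (-α) with hA2def
        set B1 := (h e / h a) ^ (-α) with hB1def
        set B2 := (h b / h e) ^ (-α) with hB2def
        set D := (h t / h a) ^ (-α) with hDdef
        have hA1nn : 0 ≤ A1 := rnn _ (le_of_lt (div_pos hpt hpe))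
        have hB2nn : 0 ≤ B2 := rnn _ (le_of_lt (div_pos hpb hpe))
        have hD : A1 * B1 = D := by
          rw [hA1def, hB1def, hDdef, ← rmul _ _ (le_of_lt (div_pos hpt hpe))
            (le_of_lt (div_pos hpe hpa))]
          congr 1
          field_simp
        have hA1le : A1 ≤ 1 := rle1 _ ((one_le_div hpe).2 (hm e heJ t htJ het))
        have hB2A2 : B2 ≤ A2 := by
          apply ranti _ _ (div_pos hpb hpt)
          apply div_le_div_of_nonneg_left (le_of_lt hpb) hpe (hm e heJ t htJ het)
        have hstep : K * A1 * ‖x e‖ ≤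
            K * A1 * (c * (K * B1 * ‖x a‖ + K * B2 * ‖x b‖)) :=
          mul_le_mul_of_nonneg_left hne (by positivity)
        have hAB : A1 * B2 ≤ A2 := by
          calc A1 * B2 ≤ 1 * B2 := mul_le_mul_of_nonneg_right hA1le hB2nn
            _ = B2 := one_mul _
            _ ≤ A2 := hB2A2
        calc ‖x t‖ ≤ K * A1 * ‖x e‖ + K * A2 * ‖x b‖ := hkey
          _ ≤ K * A1 * (c * (K * B1 * ‖x a‖ + K * B2 * ‖x b‖)) + K * A2 * ‖x b‖ := by
              linarith
          _ = c * K * K * ((A1 * B1) * ‖x a‖) + (c * K * K * (A1 * B2) + K * A2) * ‖x b‖ := by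
              ring
          _ ≤ c * K * K * (D * ‖x a‖) + (c * K * K * A2 + K * A2) * ‖x b‖ := by
              rw [hD]
              refine add_le_add le_rfl (mul_le_mul_of_nonneg_right ?_ (norm_nonneg _))
              have : c * K * K * (A1 * B2) ≤ c * K * K * A2 :=
                mul_le_mul_of_nonneg_left hAB (by positivity)
              linarith
          _ ≤ (c * K * K + K) * (D * ‖x a‖ + A2 * ‖x b‖) := by
              linarith [mul_nonneg hK0.le hXnn, mul_nonneg hK0.le hYnn]
      · -- mixed case, t ≤ e
        have hkey := hexp_key hinvarm hSmJ hestm1 hestm2 x hsol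
          (a := a) (t := t) (b := e) ⟨haJ, hat.trans hte⟩ ⟨htJ, hte⟩
          ⟨heJ, le_rfl⟩ hat hte
        set E1 := (h e / h t) ^ (-α) with hE1def
        set A2 := (h b / h t) ^ (-α) with hA2def
        set B1 := (h e / h a) ^ (-α) with hB1def
        set B2 := (h b / h e) ^ (-α) with hB2def
        set D := (h t / h a) ^ (-α) with hDdef
        have hE1nn : 0 ≤ E1 := rnn _ (le_of_lt (div_pos hpe hpt))
        have hB1nn : 0 ≤ B1 := rnn _ (le_of_lt (div_pos hpe hpa))
        have hE : E1 * B2 = A2 := by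
          rw [hE1def, hB2def, hA2def, ← rmul _ _ (le_of_lt (div_pos hpe hpt))
            (le_of_lt (div_pos hpb hpe))]
          congr 1
          field_simp
        have hE1le : E1 ≤ 1 := rle1 _ ((one_le_div hpt).2 (hm t htJ e heJ hte))
        have hB1D : B1 ≤ D := by
          apply ranti _ _ (div_pos hpt hpa)
          exact (div_le_div_iff_of_pos_right hpa).2 (hm t htJ e heJ hte)
        have hA2nn' : 0 ≤ A2 := hA2nn
        calc ‖x t‖ ≤ K * D * ‖x a‖ + K * E1 * ‖x e‖ := hkey
          _ ≤ K * D * ‖x a‖ + K * E1 * (c * (K * B1 * ‖x a‖ + K * B2 * ‖x b‖)) := by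
              have := mul_le_mul_of_nonneg_left hne
                (show (0:ℝ) ≤ K * E1 by positivity)
              linarith
          _ = (K * D + c * K * K * (E1 * B1)) * ‖x a‖ + c * K * K * ((E1 * B2) * ‖x b‖) := by
              ring
          _ ≤ (K * D + c * K * K * D) * ‖x a‖ + c * K * K * (A2 * ‖x b‖) := by
              rw [hE]
              refine add_le_add (mul_le_mul_of_nonneg_right ?_ (norm_nonneg _)) le_rfl
              have h1 : E1 * B1 ≤ B1 := by
                calc E1 * B1 ≤ 1 * B1 := mul_le_mul_of_nonneg_right hE1le hB1nn
                  _ = B1 := one_mul _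
              have h2 : E1 * B1 ≤ D := h1.trans hB1D
              have := mul_le_mul_of_nonneg_left h2 (show (0:ℝ) ≤ c * K * K by positivity)
              linarith
          _ ≤ (c * K * K + K) * (D * ‖x a‖ + A2 * ‖x b‖) := by
              linarith [mul_nonneg hK0.le hXnn, mul_nonneg hK0.le hYnn]
end

section
/- If x' = A(t)x is h-expansive on J (with constants L, β), then it is uniformly h-noncritical on J: there exist T > e and θ ∈ (0,1) such that every solution x satisfies |x(t)| ≤ θ · sup{ |x(u)| : 1/h(T) < h(u)/h(t) ≤ h(T) } for all t with [t*T⁻¹, t*T] ⊂ J. -/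
/-- if the system is `h`-expansive on `J` with constants
`L, β > 0`, then it is uniformly `h`-noncritical on `J`: there are `T > e`
and `θ ∈ (0,1)` with `|x(t)| ≤ θ·sup{|x(u)| : 1/h(T) < h(u)/h(t) ≤ h(T)}`
(formulated via arbitrary upper bounds `M` of the sup). -/
theorem h_expansive_implies_h_noncritical
    (n : ℕ) (a₀ : EReal) (J : Set ℝ) (hJ : J = {t : ℝ | a₀ < (t : EReal)})
    (h : ℝ → ℝ) (hmono : StrictMonoOn h J)
    (hmaps : Set.MapsTo h J (Set.Ioi 0)) (hsurj : Set.SurjOn h J (Set.Ioi 0))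
    (Φ : ℝ → ℝ → ((Fin n → ℝ) →L[ℝ] (Fin n → ℝ)))
    (hΦid : ∀ t ∈ J, Φ t t = 1)
    (hΦcoc : ∀ t ∈ J, ∀ s ∈ J, ∀ r ∈ J, (Φ t s).comp (Φ s r) = Φ t r)
    (e : ℝ) (heJ : e ∈ J) (hhe : h e = 1)
    (L β : ℝ) (hL : 0 < L) (hβ : 0 < β)
    (hexp : ∀ x : ℝ → (Fin n → ℝ),
      (∀ t ∈ J, ∀ s ∈ J, x t = (Φ t s) (x s)) →
      ∀ a ∈ J, ∀ b ∈ J, a ≤ b → ∀ t, a ≤ t → t ≤ b →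
        ‖x t‖ ≤ L * ((h t / h a) ^ (-β) * ‖x a‖ + (h b / h t) ^ (-β) * ‖x b‖)) :
    ∃ T ∈ J, e < T ∧ ∃ θ : ℝ, 0 < θ ∧ θ < 1 ∧
      ∀ x : ℝ → (Fin n → ℝ),
        (∀ t ∈ J, ∀ s ∈ J, x t = (Φ t s) (x s)) →
        ∀ t ∈ J, ∀ M : ℝ,
          (∀ u ∈ J, (h T)⁻¹ < h u / h t → h u / h t ≤ h T → ‖x u‖ ≤ M) →
          ‖x t‖ ≤ θ * M := by
  set σ : ℝ := max 2 ((2*L) ^ ((1:ℝ)/β) + 1) with hσdef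
  have hσ2 : (2:ℝ) ≤ σ := le_max_left _ _
  have hσ1 : (1:ℝ) < σ := by linarith
  have hσ0 : (0:ℝ) < σ := by linarith
  have hσβpos : 0 < σ ^ β := Real.rpow_pos_of_pos hσ0 _
  have hσβ : 2*L < σ ^ β := by
    have h1 : (2*L) ^ ((1:ℝ)/β) + 1 ≤ σ := le_max_right _ _
    have h2 : ((2*L) ^ ((1:ℝ)/β)) ^ β < σ ^ β :=
      Real.rpow_lt_rpow (Real.rpow_nonneg (by linarith) _) (by linarith) hβ
    rwa [← Real.rpow_mul (by linarith), one_div, inv_mul_cancel₀ (ne_of_gt hβ),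
      Real.rpow_one] at h2
  obtain ⟨T, hTJ, hTval⟩ := hsurj (show σ * σ ∈ Set.Ioi (0:ℝ) by
    simp [Set.mem_Ioi]; positivity)
  refine ⟨T, hTJ, ?_, L * (σ ^ (-β) + (σ*σ) ^ (-β)), ?_, ?_, ?_⟩
  · have : h e < h T := by rw [hhe, hTval]; nlinarith
    exact (hmono.lt_iff_lt heJ hTJ).mp this
  · positivity
  · have h1 : (σ*σ) ^ (-β) ≤ σ ^ (-β) := by
      rw [Real.rpow_neg (by positivity), Real.rpow_neg (by positivity)]
      apply inv_anti₀ hσβpos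
      exact Real.rpow_le_rpow (le_of_lt hσ0) (by nlinarith) (le_of_lt hβ)
    have h2 : σ ^ (-β) = (σ ^ β)⁻¹ := Real.rpow_neg (le_of_lt hσ0) _
    have h3 : σ ^ (-β) < (2*L)⁻¹ := by
      rw [h2]
      exact inv_strictAnti₀ (by linarith) hσβ
    have h4 : 0 < σ ^ (-β) := Real.rpow_pos_of_pos hσ0 _
    have : L * (σ ^ (-β) + (σ*σ) ^ (-β)) ≤ L * (2 * σ ^ (-β)) := by nlinarith
    have h5 : L * (2 * σ ^ (-β)) < 1 := by
      have := mul_lt_mul_of_pos_left h3 (show (0:ℝ) < 2*L by linarith)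
      rw [mul_inv_cancel₀ (show (2*L) ≠ 0 by positivity)] at this
      nlinarith
    linarith
  · intro x hx t htJ M hM
    have htpos : 0 < h t := hmaps htJ
    obtain ⟨a, haJ, haval⟩ := hsurj (show h t / σ ∈ Set.Ioi (0:ℝ) by
      simp [Set.mem_Ioi]; positivity)
    obtain ⟨b, hbJ, hbval⟩ := hsurj (show h t * (σ*σ) ∈ Set.Ioi (0:ℝ) by
      simp [Set.mem_Ioi]; positivity)
    have hat : a < t := by
      apply (hmono.lt_iff_lt haJ htJ).mp
      rw [haval]
      calc h t / σ < h t / 1 := by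
            apply div_lt_div_of_pos_left htpos one_pos hσ1
        _ = h t := by ring
    have htb : t < b := by
      apply (hmono.lt_iff_lt htJ hbJ).mp
      rw [hbval]
      nlinarith [mul_lt_mul_of_pos_left (show (1:ℝ) < σ*σ by nlinarith) htpos]
    have hrat_a : h t / h a = σ := by
      rw [haval]; field_simp
    have hrat_b : h b / h t = σ * σ := by
      rw [hbval]; field_simp
    have hrat_a' : h a / h t = σ⁻¹ := by
      rw [haval]; field_simp
    have hxa : ‖x a‖ ≤ M := by
      apply hM a haJ
      · rw [hTval, hrat_a']
        rw [inv_lt_inv₀ (by positivity) hσ0]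
        nlinarith
      · rw [hTval, hrat_a']
        have : σ⁻¹ ≤ 1 := by
          rw [inv_le_one_iff₀]; right; linarith
        nlinarith
    have hxb : ‖x b‖ ≤ M := by
      apply hM b hbJ
      · rw [hTval, hrat_b]
        have h1 : (σ*σ)⁻¹ < 1 := by
          rw [inv_lt_one_iff₀]; right; nlinarith
        nlinarith
      · rw [hTval, hrat_b]
    have key := hexp x hx a haJ b hbJ (by linarith) t (le_of_lt hat) (le_of_lt htb)
    rw [hrat_a, hrat_b] at key
    calc ‖x t‖ ≤ L * (σ ^ (-β) * ‖x a‖ + (σ*σ) ^ (-β) * ‖x b‖) := key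
      _ ≤ L * (σ ^ (-β) * M + (σ*σ) ^ (-β) * M) := by
          gcongr <;> positivity
      _ = L * (σ ^ (-β) + (σ*σ) ^ (-β)) * M := by ring
end

section
/- The system x' = A(t)x has a uniform h-dichotomy on J if and only if (a) it has uniform h-dichotomies on (a₀,e] and [e,∞) with projectors P⁻, P⁺, (b) it has no nontrivial bounded solution, and (c) dim range P⁺ + dim kernel P⁻ = n (i.e., the index i(A) = dim range P⁺ + dim kernel P⁻ − n equals 0). -/
/-- Uniform `h`-dichotomy of the evolution family `Φ` on the interval `I`, with
invariant projector `P` and constants `K ≥ 1`, `α > 0`. -/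
def UnifHDich (n : ℕ) (h : ℝ → ℝ)
    (Φ : ℝ → ℝ → ((Fin n → ℝ) →L[ℝ] (Fin n → ℝ)))
    (I : Set ℝ) (P : ℝ → ((Fin n → ℝ) →L[ℝ] (Fin n → ℝ))) (K α : ℝ) : Prop :=
  1 ≤ K ∧ 0 < α ∧
  (∀ t ∈ I, (P t).comp (P t) = P t) ∧
  (∀ t ∈ I, ∀ s ∈ I, (P t).comp (Φ t s) = (Φ t s).comp (P s)) ∧
  (∀ t ∈ I, ∀ s ∈ I, s ≤ t → ‖(Φ t s).comp (P s)‖ ≤ K * (h t / h s) ^ (-α)) ∧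
  (∀ t ∈ I, ∀ s ∈ I, t ≤ s → ‖(Φ t s).comp (1 - P s)‖ ≤ K * (h s / h t) ^ (-α))

private lemma unifHDich_mono {n : ℕ} {h : ℝ → ℝ}
    {Φ : ℝ → ℝ → ((Fin n → ℝ) →L[ℝ] (Fin n → ℝ))} {I I' : Set ℝ}
    {P : ℝ → ((Fin n → ℝ) →L[ℝ] (Fin n → ℝ))} {K α : ℝ} (hsub : I' ⊆ I)
    (H : UnifHDich n h Φ I P K α) : UnifHDich n h Φ I' P K α := by
  obtain ⟨h1, h2, h3, h4, h5, h6⟩ := H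
  exact ⟨h1, h2, fun t ht => h3 t (hsub ht), fun t ht s hs => h4 t (hsub ht) s (hsub hs),
    fun t ht s hs => h5 t (hsub ht) s (hsub hs), fun t ht s hs => h6 t (hsub ht) s (hsub hs)⟩

set_option maxHeartbeats 3000000

private lemma rpow_div_neg {a b γ : ℝ} (ha : 0 < a) (hb : 0 < b) :
    (a / b) ^ (-γ) = (b / a) ^ γ := by
  rw [Real.rpow_neg (by positivity), ← Real.inv_rpow (by positivity), inv_div]

private lemma rpow_ratio {a b : ℝ} (α : ℝ) (ha : 0 < a) (hb : 0 < b) :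
    (a / b) ^ (-α) = b ^ α * (a ^ α)⁻¹ := by
  rw [rpow_div_neg ha hb, Real.div_rpow hb.le ha.le, div_eq_mul_inv]

private lemma proj_exists {n : ℕ} (S U : Submodule ℝ (Fin n → ℝ)) (hc : IsCompl S U) :
    ∃ Q : (Fin n → ℝ) →L[ℝ] (Fin n → ℝ),
      (∀ v ∈ S, Q v = v) ∧ (∀ v ∈ U, Q v = 0) ∧ (∀ v, Q v ∈ S) ∧ (∀ v, v - Q v ∈ U) := by
  refine ⟨LinearMap.toContinuousLinearMap (S.subtype ∘ₗ S.projectionOnto U hc), ?_, ?_, ?_, ?_⟩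
  · intro v hv
    have := Submodule.linearProjOfIsCompl_apply_left hc ⟨v, hv⟩
    simp [this]
  · intro v hv
    have := Submodule.linearProjOfIsCompl_apply_right hc ⟨v, hv⟩
    simp [this]
  · intro v; simp
  · intro v
    obtain ⟨a, ha, b, hb, hab⟩ := Submodule.mem_sup.1
      (by rw [codisjoint_iff.1 hc.codisjoint]; trivial : v ∈ S ⊔ U)
    have hQa : (LinearMap.toContinuousLinearMap (S.subtype ∘ₗ S.projectionOnto U hc)) a = a := by
      have := Submodule.linearProjOfIsCompl_apply_left hc ⟨a, ha⟩
      simp [this]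
    have hQb : (LinearMap.toContinuousLinearMap (S.subtype ∘ₗ S.projectionOnto U hc)) b = 0 := by
      have := Submodule.linearProjOfIsCompl_apply_right hc ⟨b, hb⟩
      simp [this]
    have : v - (LinearMap.toContinuousLinearMap (S.subtype ∘ₗ S.projectionOnto U hc)) v = b := by
      rw [← hab, map_add, hQa, hQb]; ring
    rw [this]; exact hb

private lemma norm_comp3 {n : ℕ} (A B C : (Fin n → ℝ) →L[ℝ] (Fin n → ℝ)) :
    ‖A.comp (B.comp C)‖ ≤ ‖A‖ * (‖B‖ * ‖C‖) :=
  le_trans (ContinuousLinearMap.opNorm_comp_le _ _)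
    (mul_le_mul_of_nonneg_left (ContinuousLinearMap.opNorm_comp_le _ _) (norm_nonneg A))

-- exponent-arithmetic helpers; all powers are rpow
private lemma prod_aux_BB {s t α βm : ℝ} (hs : 0 < s) (hst : s ≤ t) (ht1 : t ≤ 1)
    (hα : 0 < α) (hαβ : α ≤ βm) : t ^ βm * s ^ βm ≤ (t / s) ^ (-α) := by
  have ht0 : 0 < t := lt_of_lt_of_le hs hst
  rw [rpow_ratio α ht0 hs]
  have h1 : t ^ βm ≤ (t ^ α)⁻¹ := by
    have : t ^ βm ≤ 1 := Real.rpow_le_one ht0.le ht1 (le_trans hα.le hαβ)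
    have h2 : t ^ α ≤ 1 := Real.rpow_le_one ht0.le ht1 hα.le
    have h3 : (0:ℝ) < t ^ α := Real.rpow_pos_of_pos ht0 α
    calc t ^ βm ≤ 1 := this
      _ ≤ (t ^ α)⁻¹ := (one_le_inv₀ h3).2 h2
  have h2 : s ^ βm ≤ s ^ α := Real.rpow_le_rpow_of_exponent_ge hs (le_trans hst ht1) hαβ
  calc t ^ βm * s ^ βm ≤ (t ^ α)⁻¹ * s ^ α := by
        apply mul_le_mul h1 h2 (Real.rpow_pos_of_pos hs βm).le (by positivity)
    _ = s ^ α * (t ^ α)⁻¹ := by ring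

private lemma prod_aux_C {s t α βm βp : ℝ} (hs0 : 0 < s) (hs1 : s ≤ 1) (ht : 1 ≤ t)
    (hα : 0 < α) (hm : α ≤ βm) (hp : α ≤ βp) : t ^ (-βp) * s ^ βm ≤ (t / s) ^ (-α) := by
  have ht0 : 0 < t := lt_of_lt_of_le one_pos ht
  rw [rpow_ratio α ht0 hs0]
  have h1 : t ^ (-βp) ≤ (t ^ α)⁻¹ := by
    rw [← Real.rpow_neg ht0.le]
    exact Real.rpow_le_rpow_of_exponent_le ht (by linarith)
  have h2 : s ^ βm ≤ s ^ α := Real.rpow_le_rpow_of_exponent_ge hs0 hs1 hm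
  calc t ^ (-βp) * s ^ βm ≤ (t ^ α)⁻¹ * s ^ α := by
        apply mul_le_mul h1 h2 (Real.rpow_pos_of_pos hs0 βm).le (by positivity)
    _ = s ^ α * (t ^ α)⁻¹ := by ring

private lemma prod_aux_B' {t s α βp : ℝ} (ht : 1 ≤ t) (hts : t ≤ s)
    (hα : 0 < α) (hp : α ≤ βp) : t ^ (-βp) * s ^ (-βp) ≤ (s / t) ^ (-α) := by
  have ht0 : 0 < t := lt_of_lt_of_le one_pos ht
  have hs1 : 1 ≤ s := le_trans ht hts
  have hs0 : 0 < s := lt_of_lt_of_le one_pos hs1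
  rw [rpow_ratio α hs0 ht0]
  have h1 : t ^ (-βp) ≤ t ^ α := by
    calc t ^ (-βp) ≤ 1 := Real.rpow_le_one_of_one_le_of_nonpos ht (by linarith)
      _ ≤ t ^ α := by
          rw [← Real.rpow_zero t]
          exact Real.rpow_le_rpow_of_exponent_le ht hα.le
  have h2 : s ^ (-βp) ≤ (s ^ α)⁻¹ := by
    rw [← Real.rpow_neg hs0.le]
    exact Real.rpow_le_rpow_of_exponent_le hs1 (by linarith)
  exact mul_le_mul h1 h2 (Real.rpow_pos_of_pos hs0 (-βp)).le (by positivity)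

private lemma prod_aux_C' {t s α βm βp : ℝ} (ht0 : 0 < t) (ht1 : t ≤ 1) (hs : 1 ≤ s)
    (hα : 0 < α) (hm : α ≤ βm) (hp : α ≤ βp) : t ^ βm * s ^ (-βp) ≤ (s / t) ^ (-α) := by
  have hs0 : 0 < s := lt_of_lt_of_le one_pos hs
  rw [rpow_ratio α hs0 ht0]
  have h1 : t ^ βm ≤ t ^ α := Real.rpow_le_rpow_of_exponent_ge ht0 ht1 hm
  have h2 : s ^ (-βp) ≤ (s ^ α)⁻¹ := by
    rw [← Real.rpow_neg hs0.le]
    exact Real.rpow_le_rpow_of_exponent_le hs (by linarith)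
  exact mul_le_mul h1 h2 (Real.rpow_pos_of_pos hs0 (-βp)).le (by positivity)

/-- Theorem `FullDico`: the system has a uniform `h`-dichotomy
on all of `J` iff (a) it has uniform `h`-dichotomies on `(a₀,e]` and `[e,∞)`
with projectors `P⁻`, `P⁺`, (b) it has no nontrivial bounded solution, and
(c) the index vanishes: `dim range P⁺ + dim ker P⁻ = n`. -/
theorem hdichotomy_on_J_iff_index_zero
    (n : ℕ) (a₀ : EReal) (J : Set ℝ) (hJ : J = {t : ℝ | a₀ < (t : EReal)})
    (h : ℝ → ℝ) (hmono : StrictMonoOn h J)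
    (hmaps : Set.MapsTo h J (Set.Ioi 0)) (hsurj : Set.SurjOn h J (Set.Ioi 0))
    (Φ : ℝ → ℝ → ((Fin n → ℝ) →L[ℝ] (Fin n → ℝ)))
    (hΦid : ∀ t ∈ J, Φ t t = 1)
    (hΦcoc : ∀ t ∈ J, ∀ s ∈ J, ∀ r ∈ J, (Φ t s).comp (Φ s r) = Φ t r)
    (e : ℝ) (heJ : e ∈ J) (hhe : h e = 1) :
    (∃ P K α, UnifHDich n h Φ J P K α) ↔
      (∃ Pm Km αm, UnifHDich n h Φ {u ∈ J | u ≤ e} Pm Km αm ∧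
        ∃ Pp Kp αp, UnifHDich n h Φ (Set.Ici e) Pp Kp αp ∧
        (∀ x : ℝ → (Fin n → ℝ),
          (∀ t ∈ J, ∀ s ∈ J, x t = (Φ t s) (x s)) →
          (∃ C : ℝ, ∀ t ∈ J, ‖x t‖ ≤ C) →
          ∀ t ∈ J, x t = 0) ∧
        Module.finrank ℝ
            ↥(LinearMap.range ((Pp e : (Fin n → ℝ) →ₗ[ℝ] (Fin n → ℝ)))) +
          Module.finrank ℝ
            ↥(LinearMap.ker ((Pm e : (Fin n → ℝ) →ₗ[ℝ] (Fin n → ℝ)))) = n) := by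
  have hIci : Set.Ici e ⊆ J := by
    intro t ht
    rw [hJ]
    rw [hJ] at heJ
    exact lt_of_lt_of_le heJ (EReal.coe_le_coe_iff.2 ht)
  have hsubm : {u ∈ J | u ≤ e} ⊆ J := fun u hu => hu.1
  have hpos : ∀ t ∈ J, (0:ℝ) < h t := fun t ht => hmaps ht
  have hmon : ∀ t ∈ J, ∀ s ∈ J, s ≤ t → h s ≤ h t := fun t ht s hs hst =>
    (hmono.monotoneOn) hs ht hst
  constructor
  · rintro ⟨P, K, α, H⟩
    obtain ⟨hK, hα, hidem, hcomm, hfw, hbw⟩ := H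
    refine ⟨P, K, α, unifHDich_mono hsubm ⟨hK, hα, hidem, hcomm, hfw, hbw⟩,
      P, K, α, unifHDich_mono hIci ⟨hK, hα, hidem, hcomm, hfw, hbw⟩, ?_, ?_⟩
    · -- no nontrivial bounded solution
      rintro x hinv ⟨C, hC⟩ t ht
      have hC0 : (0:ℝ) ≤ C := le_trans (norm_nonneg _) (hC e heJ)
      have hK0 : (0:ℝ) < K := lt_of_lt_of_le one_pos hK
      have hKC : (0:ℝ) < K * (C + 1) := by positivity
      have hht : (0:ℝ) < h t := hpos t ht
      -- key ε-estimates
      have key : ∀ ε > (0:ℝ), ‖(P t) (x t)‖ ≤ ε ∧ ‖x t - (P t) (x t)‖ ≤ ε := by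
        intro ε hε
        set ρ : ℝ := min 1 ((ε / (K * (C + 1))) ^ (α⁻¹)) with hρdef
        have hρpos : 0 < ρ := by
          apply lt_min one_pos
          exact Real.rpow_pos_of_pos (by positivity) _
        have hρ1 : ρ ≤ 1 := min_le_left _ _
        have hρα : K * (C + 1) * ρ ^ α ≤ ε := by
          have h1 : ρ ^ α ≤ ((ε / (K * (C + 1))) ^ (α⁻¹)) ^ α :=
            Real.rpow_le_rpow hρpos.le (min_le_right _ _) hα.le
          have h2 : ((ε / (K * (C + 1))) ^ (α⁻¹)) ^ α = ε / (K * (C + 1)) := by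
            rw [← Real.rpow_mul (by positivity : (0:ℝ) ≤ ε / (K * (C + 1))),
              inv_mul_cancel₀ (ne_of_gt hα), Real.rpow_one]
          rw [h2] at h1
          calc K * (C + 1) * ρ ^ α ≤ K * (C + 1) * (ε / (K * (C + 1))) := by
                exact mul_le_mul_of_nonneg_left h1 hKC.le
            _ = ε := by field_simp
        constructor
        · -- stable part
          obtain ⟨s, hsJ, hhs⟩ := hsurj (Set.mem_Ioi.2 (mul_pos hρpos hht))
          have hsle : h s ≤ h t := by
            rw [hhs]
            nlinarith
          have hst : s ≤ t := by
            by_contra hc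
            push_neg at hc
            exact absurd (hmono ht hsJ hc) (not_lt.2 hsle)
          have hratio : h s / h t = ρ := by
            rw [hhs]; field_simp
          have e1 : (P t) (x t) = ((Φ t s).comp (P s)) (x s) := by
            rw [hinv t ht s hsJ, ← ContinuousLinearMap.comp_apply, hcomm t ht s hsJ]
          calc ‖(P t) (x t)‖ = ‖((Φ t s).comp (P s)) (x s)‖ := by rw [e1]
            _ ≤ ‖(Φ t s).comp (P s)‖ * ‖x s‖ := ContinuousLinearMap.le_opNorm _ _
            _ ≤ (K * (h t / h s) ^ (-α)) * (C + 1) := by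
                apply mul_le_mul (hfw t ht s hsJ hst) (by linarith [hC s hsJ])
                  (norm_nonneg _)
                  (mul_nonneg hK0.le (Real.rpow_nonneg (div_nonneg (hpos t ht).le (hpos s hsJ).le) _))
            _ = K * (C + 1) * ρ ^ α := by
                rw [rpow_div_neg hht (hpos s hsJ), hratio]; ring
            _ ≤ ε := hρα
        · -- unstable part
          obtain ⟨s, hsJ, hhs⟩ := hsurj (Set.mem_Ioi.2 (div_pos hht hρpos))
          have hsle : h t ≤ h s := by
            rw [hhs, le_div_iff₀ hρpos]
            nlinarith
          have hst : t ≤ s := by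
            by_contra hc
            push_neg at hc
            exact absurd (hmono hsJ ht hc) (not_lt.2 hsle)
          have hratio : h t / h s = ρ := by
            rw [hhs]
            field_simp
          have e1 : x t - (P t) (x t) = ((Φ t s).comp (1 - P s)) (x s) := by
            have : (1 - P t).comp (Φ t s) = (Φ t s).comp (1 - P s) := by
              rw [ContinuousLinearMap.sub_comp, ContinuousLinearMap.comp_sub,
                ContinuousLinearMap.one_def, ContinuousLinearMap.id_comp,
                ContinuousLinearMap.comp_id, hcomm t ht s hsJ]
            rw [← this, ContinuousLinearMap.comp_apply, ← hinv t ht s hsJ]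
            simp
          calc ‖x t - (P t) (x t)‖ = ‖((Φ t s).comp (1 - P s)) (x s)‖ := by rw [e1]
            _ ≤ ‖(Φ t s).comp (1 - P s)‖ * ‖x s‖ := ContinuousLinearMap.le_opNorm _ _
            _ ≤ (K * (h s / h t) ^ (-α)) * (C + 1) := by
                apply mul_le_mul (hbw t ht s hsJ hst) (by linarith [hC s hsJ])
                  (norm_nonneg _)
                  (mul_nonneg hK0.le (Real.rpow_nonneg (div_nonneg (hpos s hsJ).le (hpos t ht).le) _))
            _ = K * (C + 1) * ρ ^ α := by
                rw [rpow_div_neg (hpos s hsJ) hht, hratio]; ring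
            _ ≤ ε := hρα
      have h1 : (P t) (x t) = 0 := by
        rw [← norm_eq_zero]
        have : ∀ ε > (0:ℝ), ‖(P t) (x t)‖ ≤ 0 + ε := fun ε hε => by
          rw [zero_add]; exact (key ε hε).1
        have := le_of_forall_pos_le_add this
        exact le_antisymm this (norm_nonneg _)
      have h2 : x t - (P t) (x t) = 0 := by
        rw [← norm_eq_zero]
        have : ∀ ε > (0:ℝ), ‖x t - (P t) (x t)‖ ≤ 0 + ε := fun ε hε => by
          rw [zero_add]; exact (key ε hε).2
        have := le_of_forall_pos_le_add this
        exact le_antisymm this (norm_nonneg _)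
      have := sub_eq_zero.1 h2
      rw [this, h1]
    · -- index: rank-nullity
      rw [LinearMap.finrank_range_add_finrank_ker]
      simp
  · rintro ⟨Pm, Km, αm, Hm, Pp, Kp, αp, Hp, hbdd, hdim⟩
    obtain ⟨hKm, hαm, hidm, hcm, hfm, hbm⟩ := Hm
    obtain ⟨hKp, hαp, hidp, hcp, hfp, hbp⟩ := Hp
    have heM : e ∈ {u ∈ J | u ≤ e} := ⟨heJ, le_rfl⟩
    have heP : e ∈ Set.Ici e := Set.mem_Ici.2 le_rfl
    set S := LinearMap.range ((Pp e : (Fin n → ℝ) →ₗ[ℝ] (Fin n → ℝ))) with hS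
    set U := LinearMap.ker ((Pm e : (Fin n → ℝ) →ₗ[ℝ] (Fin n → ℝ))) with hU
    -- basic pointwise projector facts
    have hPpS : ∀ v ∈ S, (Pp e) v = v := by
      rintro v ⟨w, rfl⟩
      have := congrArg (fun f => f w) (hidp e heP)
      simpa using this
    have hPpmem : ∀ v, (Pp e) v ∈ S := fun v => ⟨v, rfl⟩
    have hPmU : ∀ v ∈ U, (Pm e) v = 0 := fun v hv => hv
    have hPmsub : ∀ v, v - (Pm e) v ∈ U := by
      intro v
      have := congrArg (fun f => f v) (hidm e heM)
      simp only [ContinuousLinearMap.comp_apply] at this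
      show (Pm e) (v - (Pm e) v) = 0
      rw [map_sub, this, sub_self]
    -- S and U are complementary
    have hdisj : S ⊓ U = ⊥ := by
      rw [Submodule.eq_bot_iff]
      rintro v ⟨hvS, hvU⟩
      have hbound : ∀ t ∈ J, ‖Φ t e v‖ ≤ max Km Kp * ‖v‖ := by
        intro t ht
        rcases le_total t e with hte | het
        · have hv' : (1 - Pm e) v = v := by
            simp [hPmU v hvU]
          have h1 : ‖Φ t e v‖ ≤ ‖(Φ t e).comp (1 - Pm e)‖ * ‖v‖ := by
            calc ‖Φ t e v‖ = ‖((Φ t e).comp (1 - Pm e)) v‖ := by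
                  rw [ContinuousLinearMap.comp_apply, hv']
              _ ≤ _ := ContinuousLinearMap.le_opNorm _ _
          have h2 : ‖(Φ t e).comp (1 - Pm e)‖ ≤ Km * (h e / h t) ^ (-αm) :=
            hbm t ⟨ht, hte⟩ e heM hte
          have h3 : (h e / h t) ^ (-αm) ≤ 1 := by
            apply Real.rpow_le_one_of_one_le_of_nonpos
            · rw [hhe, le_div_iff₀ (hpos t ht), one_mul]
              rw [← hhe]; exact hmon e heJ t ht hte
            · linarith
          calc ‖Φ t e v‖ ≤ (Km * (h e / h t) ^ (-αm)) * ‖v‖ :=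
                le_trans h1 (mul_le_mul_of_nonneg_right h2 (norm_nonneg v))
            _ ≤ Km * ‖v‖ := by
                apply mul_le_mul_of_nonneg_right _ (norm_nonneg v)
                nlinarith
            _ ≤ max Km Kp * ‖v‖ :=
                mul_le_mul_of_nonneg_right (le_max_left _ _) (norm_nonneg v)
        · have hv' : (Pp e) v = v := hPpS v hvS
          have h1 : ‖Φ t e v‖ ≤ ‖(Φ t e).comp (Pp e)‖ * ‖v‖ := by
            calc ‖Φ t e v‖ = ‖((Φ t e).comp (Pp e)) v‖ := by
                  rw [ContinuousLinearMap.comp_apply, hv']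
              _ ≤ _ := ContinuousLinearMap.le_opNorm _ _
          have h2 : ‖(Φ t e).comp (Pp e)‖ ≤ Kp * (h t / h e) ^ (-αp) :=
            hfp t het e heP het
          have h3 : (h t / h e) ^ (-αp) ≤ 1 := by
            apply Real.rpow_le_one_of_one_le_of_nonpos
            · rw [hhe, div_one, ← hhe]; exact hmon t ht e heJ het
            · linarith
          calc ‖Φ t e v‖ ≤ (Kp * (h t / h e) ^ (-αp)) * ‖v‖ :=
                le_trans h1 (mul_le_mul_of_nonneg_right h2 (norm_nonneg v))
            _ ≤ Kp * ‖v‖ := by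
                apply mul_le_mul_of_nonneg_right _ (norm_nonneg v)
                nlinarith
            _ ≤ max Km Kp * ‖v‖ :=
                mul_le_mul_of_nonneg_right (le_max_right _ _) (norm_nonneg v)
      have := hbdd (fun t => Φ t e v)
        (fun t ht s hs => by
          rw [← ContinuousLinearMap.comp_apply, hΦcoc t ht s hs e heJ])
        ⟨max Km Kp * ‖v‖, hbound⟩ e heJ
      have h2 : (Φ e e) v = 0 := this
      rw [hΦid e heJ] at h2
      simpa using h2
    have hcompl : IsCompl S U := by
      have hrk := Submodule.finrank_sup_add_finrank_inf_eq S U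
      rw [hdisj] at hrk
      simp only [finrank_bot, add_zero] at hrk
      refine ⟨disjoint_iff.2 hdisj, codisjoint_iff.2 ?_⟩
      apply Submodule.eq_top_of_finrank_eq
      rw [hrk, hdim]
      simp
    obtain ⟨Q, hQS, hQU, hQmem, hQsub⟩ := proj_exists S U hcompl
    -- pointwise consequences
    have q1 : ∀ v, Q (Q v) = Q v := fun v => hQS _ (hQmem v)
    have q2 : ∀ v, (Pp e) (Q v) = Q v := fun v => hPpS _ (hQmem v)
    have q3 : ∀ v, Q ((Pm e) v) = Q v := by
      intro v
      have h1 : Q v - Q ((Pm e) v) = 0 := by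
        have := hQU _ (hPmsub v)
        rwa [map_sub] at this
      exact (sub_eq_zero.1 h1).symm
    have q4 : ∀ v, (Pm e) (v - Q v) = 0 := fun v => hPmU _ (hQsub v)
    have q5 : ∀ v, Q ((Pp e) v) = (Pp e) v := fun v => hQS _ (hPpmem v)
    have q6 : ∀ v, (Pm e) (Q v) = (Pm e) v := by
      intro v
      have hzero : (Pm e) v - (Pm e) (Q v) = 0 := by
        rw [← map_sub]; exact q4 v
      exact (sub_eq_zero.1 hzero).symm
    have pidp : ∀ w, (Pp e) ((Pp e) w) = (Pp e) w := by
      intro w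
      have := congrArg (fun f => f w) (hidp e heP)
      simpa using this
    have pidm : ∀ w, (Pm e) ((Pm e) w) = (Pm e) w := by
      intro w
      have := congrArg (fun f => f w) (hidm e heM)
      simpa using this
    -- h facts
    have h_le1 : ∀ u ∈ J, u ≤ e → h u ≤ 1 := by
      intro u hu hue
      rw [← hhe]; exact hmon e heJ u hu hue
    have h_ge1 : ∀ u ∈ J, e ≤ u → 1 ≤ h u := by
      intro u hu heu
      rw [← hhe]; exact hmon u hu e heJ heu
    -- pointwise evolution facts
    have φap : ∀ a ∈ J, ∀ b ∈ J, ∀ c ∈ J, ∀ w, Φ a b (Φ b c w) = Φ a c w := by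
      intro a ha b hb c hc w
      rw [← ContinuousLinearMap.comp_apply, hΦcoc a ha b hb c hc]
    have φid : ∀ a ∈ J, ∀ w, Φ a a w = w := by
      intro a ha w
      rw [hΦid a ha]; rfl
    have cmw : ∀ a ∈ J, a ≤ e → ∀ b ∈ J, b ≤ e → ∀ w, (Pm a) (Φ a b w) = Φ a b ((Pm b) w) := by
      intro a ha hae b hb hbe w
      rw [← ContinuousLinearMap.comp_apply, hcm a ⟨ha, hae⟩ b ⟨hb, hbe⟩,
        ContinuousLinearMap.comp_apply]
    have cpw : ∀ a, e ≤ a → ∀ b, e ≤ b → ∀ w, (Pp a) (Φ a b w) = Φ a b ((Pp b) w) := by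
      intro a ha b hb w
      rw [← ContinuousLinearMap.comp_apply, hcp a ha b hb, ContinuousLinearMap.comp_apply]
    -- boundary norm bounds
    have b1 : ∀ u ∈ J, u ≤ e → ‖(Pm e).comp (Φ e u)‖ ≤ Km * (h u) ^ αm := by
      intro u hu hue
      rw [hcm e heM u ⟨hu, hue⟩]
      have := hfm e heM u ⟨hu, hue⟩ hue
      rwa [rpow_div_neg (by rw [hhe]; exact one_pos) (hpos u hu), hhe, div_one] at this
    have b2 : ∀ u ∈ J, u ≤ e → ‖(Φ u e).comp (1 - Pm e)‖ ≤ Km * (h u) ^ αm := by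
      intro u hu hue
      have := hbm u ⟨hu, hue⟩ e heM hue
      rwa [rpow_div_neg (by rw [hhe]; exact one_pos) (hpos u hu), hhe, div_one] at this
    have b3 : ∀ u ∈ J, e ≤ u → ‖(Φ u e).comp (Pp e)‖ ≤ Kp * (h u) ^ (-αp) := by
      intro u hu heu
      have := hfp u heu e heP heu
      rwa [hhe, div_one] at this
    have b4 : ∀ u ∈ J, e ≤ u → ‖(1 - Pp e).comp (Φ e u)‖ ≤ Kp * (h u) ^ (-αp) := by
      intro u hu heu
      have hid : (1 - Pp e).comp (Φ e u) = (Φ e u).comp (1 - Pp u) := by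
        rw [ContinuousLinearMap.sub_comp, ContinuousLinearMap.comp_sub,
          ContinuousLinearMap.one_def, ContinuousLinearMap.id_comp,
          ContinuousLinearMap.comp_id, hcp e heP u heu]
      rw [hid]
      have := hbp e heP u heu heu
      rwa [hhe, div_one] at this
    have nPm : ∀ s ∈ J, s ≤ e → ‖Pm s‖ ≤ Km := by
      intro s hs hse
      have := hfm s ⟨hs, hse⟩ s ⟨hs, hse⟩ le_rfl
      rwa [hΦid s hs, ContinuousLinearMap.one_def, ContinuousLinearMap.id_comp,
        div_self (hpos s hs).ne', Real.one_rpow, mul_one] at this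
    have nPp : ∀ s ∈ J, e ≤ s → ‖Pp s‖ ≤ Kp := by
      intro s hs hes
      have := hfp s hes s hes le_rfl
      rwa [hΦid s hs, ContinuousLinearMap.one_def, ContinuousLinearMap.id_comp,
        div_self (hpos s hs).ne', Real.one_rpow, mul_one] at this
    -- constants
    have hKm0 : (0:ℝ) < Km := lt_of_lt_of_le one_pos hKm
    have hKp0 : (0:ℝ) < Kp := lt_of_lt_of_le one_pos hKp
    set nQ : ℝ := ‖Q‖ with hnQdef
    set nQ' : ℝ := ‖(1 : (Fin n → ℝ) →L[ℝ] (Fin n → ℝ)) - Q‖ with hnQ'def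
    have hnQ : (0:ℝ) ≤ nQ := norm_nonneg _
    have hnQ' : (0:ℝ) ≤ nQ' := norm_nonneg _
    set Mp : ℝ := Kp + Kp * (nQ * Kp) with hMpdef
    set Mm : ℝ := Km + Km * (nQ' * Km) with hMmdef
    have hMp0 : (0:ℝ) ≤ Mp := by
      have : (0:ℝ) ≤ Kp * (nQ * Kp) := mul_nonneg hKp0.le (mul_nonneg hnQ hKp0.le)
      linarith
    have hMm0 : (0:ℝ) ≤ Mm := by
      have : (0:ℝ) ≤ Km * (nQ' * Km) := mul_nonneg hKm0.le (mul_nonneg hnQ' hKm0.le)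
      linarith
    set α : ℝ := min αm αp with hαdef
    have hα0 : (0:ℝ) < α := lt_min hαm hαp
    have hααm : α ≤ αm := min_le_left _ _
    have hααp : α ≤ αp := min_le_right _ _
    have hcA0 : (0:ℝ) ≤ Kp * Mp := mul_nonneg hKp0.le hMp0
    have hcB0 : (0:ℝ) ≤ Mm := hMm0
    have hcC0 : (0:ℝ) ≤ Kp * (nQ * Km) := mul_nonneg hKp0.le (mul_nonneg hnQ hKm0.le)
    have hcA'0 : (0:ℝ) ≤ Km * (1 + Mm) := mul_nonneg hKm0.le (by linarith)
    have hcB'0 : (0:ℝ) ≤ Mp := hMp0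
    have hcC'0 : (0:ℝ) ≤ Km * (nQ' * Kp) := mul_nonneg hKm0.le (mul_nonneg hnQ' hKp0.le)
    set K : ℝ := 1 + (Kp * Mp + Mm + Kp * (nQ * Km) + Km * (1 + Mm) + Mp + Km * (nQ' * Kp))
      with hKdef
    have hK1 : (1:ℝ) ≤ K := by rw [hKdef]; linarith
    -- uniform bounds on the projector
    have hMpB : ∀ s ∈ J, e ≤ s → ‖(Φ s e).comp (Q.comp (Φ e s))‖ ≤ Mp := by
      intro s hs hes
      have hid : (Φ s e).comp (Q.comp (Φ e s)) =
          Pp s + ((Φ s e).comp (Pp e)).comp (Q.comp ((1 - Pp e).comp (Φ e s))) := by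
        refine ContinuousLinearMap.ext fun v => ?_
        simp only [ContinuousLinearMap.comp_apply, ContinuousLinearMap.add_apply,
          ContinuousLinearMap.sub_apply, ContinuousLinearMap.one_apply]
        have hv : Φ s e (Φ e s v) = v := by rw [φap s hs e heJ s hs, φid s hs]
        have h1 : (Pp s) v = Φ s e ((Pp e) (Φ e s v)) := by
          conv_lhs => rw [← hv]
          rw [cpw s hes e le_rfl]
        rw [h1]
        simp only [map_sub, q5, q2, pidp]
        abel
      rw [hid]
      have hle : (h s) ^ (-αp) ≤ 1 :=
        Real.rpow_le_one_of_one_le_of_nonpos (h_ge1 s hs hes) (by linarith)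
      have hKple : Kp * (h s) ^ (-αp) ≤ Kp := by
        calc Kp * (h s) ^ (-αp) ≤ Kp * 1 := mul_le_mul_of_nonneg_left hle hKp0.le
          _ = Kp := mul_one Kp
      have hb3 : ‖(Φ s e).comp (Pp e)‖ ≤ Kp := le_trans (b3 s hs hes) hKple
      have hb4 : ‖(1 - Pp e).comp (Φ e s)‖ ≤ Kp := le_trans (b4 s hs hes) hKple
      calc ‖Pp s + ((Φ s e).comp (Pp e)).comp (Q.comp ((1 - Pp e).comp (Φ e s)))‖
          ≤ ‖Pp s‖ + ‖((Φ s e).comp (Pp e)).comp (Q.comp ((1 - Pp e).comp (Φ e s)))‖ :=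
            norm_add_le _ _
        _ ≤ Kp + Kp * (nQ * Kp) := by
            have h3 := norm_comp3 ((Φ s e).comp (Pp e)) Q ((1 - Pp e).comp (Φ e s))
            have : ‖((Φ s e).comp (Pp e)).comp (Q.comp ((1 - Pp e).comp (Φ e s)))‖
                ≤ Kp * (nQ * Kp) := by
              refine le_trans h3 ?_
              have := mul_le_mul_of_nonneg_left hb4 hnQ
              have h5 : ‖Q‖ * ‖(1 - Pp e).comp (Φ e s)‖ ≤ nQ * Kp := this
              have h6 : (0:ℝ) ≤ ‖Q‖ * ‖(1 - Pp e).comp (Φ e s)‖ :=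
                mul_nonneg (norm_nonneg _) (norm_nonneg _)
              exact mul_le_mul hb3 h5 h6 hKp0.le
            linarith [nPp s hs hes]
        _ = Mp := hMpdef.symm
    have hMmB : ∀ s ∈ J, s ≤ e → ‖(Φ s e).comp (Q.comp (Φ e s))‖ ≤ Mm := by
      intro s hs hse
      have hid : (Φ s e).comp (Q.comp (Φ e s)) =
          Pm s - ((Φ s e).comp (1 - Pm e)).comp ((1 - Q).comp ((Pm e).comp (Φ e s))) := by
        refine ContinuousLinearMap.ext fun v => ?_
        simp only [ContinuousLinearMap.comp_apply, ContinuousLinearMap.sub_apply,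
          ContinuousLinearMap.one_apply]
        have hv : Φ s e (Φ e s v) = v := by rw [φap s hs e heJ s hs, φid s hs]
        have h1 : (Pm s) v = Φ s e ((Pm e) (Φ e s v)) := by
          conv_lhs => rw [← hv]
          rw [cmw s hs hse e heJ le_rfl]
        rw [h1]
        simp only [map_sub, q6, pidm, q3]
        abel
      rw [hid]
      have hle : (h s) ^ αm ≤ 1 :=
        Real.rpow_le_one (hpos s hs).le (h_le1 s hs hse) hαm.le
      have hKmle : Km * (h s) ^ αm ≤ Km := by
        calc Km * (h s) ^ αm ≤ Km * 1 := mul_le_mul_of_nonneg_left hle hKm0.le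
          _ = Km := mul_one Km
      have hb1 : ‖(Pm e).comp (Φ e s)‖ ≤ Km := le_trans (b1 s hs hse) hKmle
      have hb2 : ‖(Φ s e).comp (1 - Pm e)‖ ≤ Km := le_trans (b2 s hs hse) hKmle
      calc ‖Pm s - ((Φ s e).comp (1 - Pm e)).comp ((1 - Q).comp ((Pm e).comp (Φ e s)))‖
          ≤ ‖Pm s‖ + ‖((Φ s e).comp (1 - Pm e)).comp ((1 - Q).comp ((Pm e).comp (Φ e s)))‖ :=
            norm_sub_le _ _
        _ ≤ Km + Km * (nQ' * Km) := by
            have h3 := norm_comp3 ((Φ s e).comp (1 - Pm e)) (1 - Q) ((Pm e).comp (Φ e s))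
            have h4 : ‖((Φ s e).comp (1 - Pm e)).comp ((1 - Q).comp ((Pm e).comp (Φ e s)))‖
                ≤ Km * (nQ' * Km) := by
              refine le_trans h3 ?_
              have h5 : ‖(1:(Fin n → ℝ) →L[ℝ] (Fin n → ℝ)) - Q‖ * ‖(Pm e).comp (Φ e s)‖
                  ≤ nQ' * Km := mul_le_mul_of_nonneg_left hb1 hnQ'
              have h6 : (0:ℝ) ≤ ‖(1:(Fin n → ℝ) →L[ℝ] (Fin n → ℝ)) - Q‖ * ‖(Pm e).comp (Φ e s)‖ :=
                mul_nonneg (norm_nonneg _) (norm_nonneg _)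
              exact mul_le_mul hb2 h5 h6 hKm0.le
            linarith [nPm s hs hse]
        _ = Mm := hMmdef.symm
    refine ⟨fun t => (Φ t e).comp (Q.comp (Φ e t)), K, α, hK1, hα0, ?_, ?_, ?_, ?_⟩
    · -- idempotent
      intro t ht
      refine ContinuousLinearMap.ext fun v => ?_
      simp only [ContinuousLinearMap.comp_apply]
      rw [φap e heJ t ht e heJ, φid e heJ, q1]
    · -- commutation
      intro t ht s hs
      refine ContinuousLinearMap.ext fun v => ?_
      simp only [ContinuousLinearMap.comp_apply]
      rw [φap e heJ t ht s hs, φap t ht s hs e heJ]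
    · -- forward estimate
      intro t ht s hs hst
      have hhts : h s ≤ h t := hmon t ht s hs hst
      have hrat1 : (1:ℝ) ≤ h t / h s := (one_le_div (hpos s hs)).2 hhts
      have hrat0 : (0:ℝ) ≤ (h t / h s) ^ (-α) :=
        Real.rpow_nonneg (div_nonneg (hpos t ht).le (hpos s hs).le) _
      have eq0 : (Φ t s).comp ((Φ s e).comp (Q.comp (Φ e s))) =
          (Φ t e).comp (Q.comp (Φ e s)) := by
        refine ContinuousLinearMap.ext fun v => ?_
        simp only [ContinuousLinearMap.comp_apply]
        rw [φap t ht s hs e heJ]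
      rw [eq0]
      rcases le_total t e with hte | het
      · -- case B : s ≤ t ≤ e
        have hse : s ≤ e := le_trans hst hte
        have eqB : (Φ t e).comp (Q.comp (Φ e s)) =
            (Φ t s).comp (Pm s) -
              ((Φ t e).comp (1 - Pm e)).comp ((1 - Q).comp ((Pm e).comp (Φ e s))) := by
          refine ContinuousLinearMap.ext fun v => ?_
          simp only [ContinuousLinearMap.comp_apply, ContinuousLinearMap.sub_apply,
            ContinuousLinearMap.one_apply]
          have hv : Φ s e (Φ e s v) = v := by rw [φap s hs e heJ s hs, φid s hs]
          have h1 : (Pm s) v = Φ s e ((Pm e) (Φ e s v)) := by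
            conv_lhs => rw [← hv]
            rw [cmw s hs hse e heJ le_rfl]
          rw [h1, φap t ht s hs e heJ]
          simp only [map_sub, q6, pidm, q3]
          abel
        rw [eqB]
        have n1 : ‖(Φ t s).comp (Pm s)‖ ≤ Km * (h t / h s) ^ (-αm) :=
          hfm t ⟨ht, hte⟩ s ⟨hs, hse⟩ hst
        have n1' : ‖(Φ t s).comp (Pm s)‖ ≤ Km * (h t / h s) ^ (-α) :=
          le_trans n1 (mul_le_mul_of_nonneg_left
            (Real.rpow_le_rpow_of_exponent_le hrat1 (by linarith : -αm ≤ -α)) hKm0.le)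
        have n2 : ‖((Φ t e).comp (1 - Pm e)).comp ((1 - Q).comp ((Pm e).comp (Φ e s)))‖
            ≤ (Km * (h t) ^ αm) * (nQ' * (Km * (h s) ^ αm)) := by
          refine le_trans (norm_comp3 _ _ _) ?_
          have hb2 := b2 t ht hte
          have hb1 := b1 s hs hse
          have h5 : ‖(1:(Fin n → ℝ) →L[ℝ] (Fin n → ℝ)) - Q‖ * ‖(Pm e).comp (Φ e s)‖
              ≤ nQ' * (Km * (h s) ^ αm) := mul_le_mul_of_nonneg_left hb1 hnQ'
          exact mul_le_mul hb2 h5 (mul_nonneg (norm_nonneg _) (norm_nonneg _))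
            (mul_nonneg hKm0.le (Real.rpow_nonneg (hpos t ht).le _))
        have n2' : ‖((Φ t e).comp (1 - Pm e)).comp ((1 - Q).comp ((Pm e).comp (Φ e s)))‖
            ≤ (Km * (nQ' * Km)) * (h t / h s) ^ (-α) := by
          have hbb := prod_aux_BB (hpos s hs) hhts (h_le1 t ht hte) hα0 hααm
          calc ‖((Φ t e).comp (1 - Pm e)).comp ((1 - Q).comp ((Pm e).comp (Φ e s)))‖
              ≤ (Km * (h t) ^ αm) * (nQ' * (Km * (h s) ^ αm)) := n2
            _ = (Km * (nQ' * Km)) * ((h t) ^ αm * (h s) ^ αm) := by ring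
            _ ≤ (Km * (nQ' * Km)) * (h t / h s) ^ (-α) := by
                apply mul_le_mul_of_nonneg_left hbb
                exact mul_nonneg hKm0.le (mul_nonneg hnQ' hKm0.le)
        calc ‖(Φ t s).comp (Pm s) -
              ((Φ t e).comp (1 - Pm e)).comp ((1 - Q).comp ((Pm e).comp (Φ e s)))‖
            ≤ ‖(Φ t s).comp (Pm s)‖ +
              ‖((Φ t e).comp (1 - Pm e)).comp ((1 - Q).comp ((Pm e).comp (Φ e s)))‖ :=
              norm_sub_le _ _
          _ ≤ Km * (h t / h s) ^ (-α) + (Km * (nQ' * Km)) * (h t / h s) ^ (-α) := by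
              linarith
          _ = Mm * (h t / h s) ^ (-α) := by rw [hMmdef]; ring
          _ ≤ K * (h t / h s) ^ (-α) := by
              apply mul_le_mul_of_nonneg_right _ hrat0
              rw [hKdef]; linarith
      · rcases le_total s e with hse | hes
        · -- case C : s ≤ e ≤ t
          have eqC : (Φ t e).comp (Q.comp (Φ e s)) =
              ((Φ t e).comp (Pp e)).comp (Q.comp ((Pm e).comp (Φ e s))) := by
            refine ContinuousLinearMap.ext fun v => ?_
            simp only [ContinuousLinearMap.comp_apply]
            rw [q3, q2]
          rw [eqC]
          have n1 : ‖((Φ t e).comp (Pp e)).comp (Q.comp ((Pm e).comp (Φ e s)))‖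
              ≤ (Kp * (h t) ^ (-αp)) * (nQ * (Km * (h s) ^ αm)) := by
            refine le_trans (norm_comp3 _ _ _) ?_
            have hb3 := b3 t ht het
            have hb1 := b1 s hs hse
            have h5 : ‖Q‖ * ‖(Pm e).comp (Φ e s)‖ ≤ nQ * (Km * (h s) ^ αm) :=
              mul_le_mul_of_nonneg_left hb1 hnQ
            exact mul_le_mul hb3 h5 (mul_nonneg (norm_nonneg _) (norm_nonneg _))
              (mul_nonneg hKp0.le (Real.rpow_nonneg (hpos t ht).le _))
          have hcc := prod_aux_C (hpos s hs) (h_le1 s hs hse) (h_ge1 t ht het) hα0 hααm hααp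
          calc ‖((Φ t e).comp (Pp e)).comp (Q.comp ((Pm e).comp (Φ e s)))‖
              ≤ (Kp * (h t) ^ (-αp)) * (nQ * (Km * (h s) ^ αm)) := n1
            _ = (Kp * (nQ * Km)) * ((h t) ^ (-αp) * (h s) ^ αm) := by ring
            _ ≤ (Kp * (nQ * Km)) * (h t / h s) ^ (-α) :=
                mul_le_mul_of_nonneg_left hcc hcC0
            _ ≤ K * (h t / h s) ^ (-α) := by
                apply mul_le_mul_of_nonneg_right _ hrat0
                rw [hKdef]; linarith
        · -- case A : e ≤ s ≤ t
          have eqA : (Φ t e).comp (Q.comp (Φ e s)) =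
              ((Φ t s).comp (Pp s)).comp ((Φ s e).comp (Q.comp (Φ e s))) := by
            refine ContinuousLinearMap.ext fun v => ?_
            simp only [ContinuousLinearMap.comp_apply]
            rw [cpw s hes e le_rfl, q2, φap t ht s hs e heJ]
          rw [eqA]
          have n1 : ‖(Φ t s).comp (Pp s)‖ ≤ Kp * (h t / h s) ^ (-αp) :=
            hfp t (le_trans hes hst) s hes hst
          have n1' : ‖(Φ t s).comp (Pp s)‖ ≤ Kp * (h t / h s) ^ (-α) :=
            le_trans n1 (mul_le_mul_of_nonneg_left
              (Real.rpow_le_rpow_of_exponent_le hrat1 (by linarith : -αp ≤ -α)) hKp0.le)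
          calc ‖((Φ t s).comp (Pp s)).comp ((Φ s e).comp (Q.comp (Φ e s)))‖
              ≤ ‖(Φ t s).comp (Pp s)‖ * ‖(Φ s e).comp (Q.comp (Φ e s))‖ :=
                ContinuousLinearMap.opNorm_comp_le _ _
            _ ≤ (Kp * (h t / h s) ^ (-α)) * Mp := by
                apply mul_le_mul n1' (hMpB s hs hes) (norm_nonneg _)
                exact mul_nonneg hKp0.le hrat0
            _ = (Kp * Mp) * (h t / h s) ^ (-α) := by ring
            _ ≤ K * (h t / h s) ^ (-α) := by
                apply mul_le_mul_of_nonneg_right _ hrat0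
                rw [hKdef]; linarith
    · -- backward estimate
      intro t ht s hs hts
      have hhts : h t ≤ h s := hmon s hs t ht hts
      have hrat1 : (1:ℝ) ≤ h s / h t := (one_le_div (hpos t ht)).2 hhts
      have hrat0 : (0:ℝ) ≤ (h s / h t) ^ (-α) :=
        Real.rpow_nonneg (div_nonneg (hpos s hs).le (hpos t ht).le) _
      have eq0 : (Φ t s).comp (1 - (Φ s e).comp (Q.comp (Φ e s))) =
          (Φ t e).comp ((1 - Q).comp (Φ e s)) := by
        refine ContinuousLinearMap.ext fun v => ?_
        simp only [ContinuousLinearMap.comp_apply, ContinuousLinearMap.sub_apply,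
          ContinuousLinearMap.one_apply]
        have hv : Φ s e (Φ e s v) = v := by rw [φap s hs e heJ s hs, φid s hs]
        have h2 : Φ t s v = Φ t e (Φ e s v) := by
          conv_lhs => rw [← hv]
          rw [φap t ht s hs e heJ]
        simp only [map_sub]
        rw [φap t ht s hs e heJ, h2]
      rw [eq0]
      rcases le_total e t with het | hte
      · -- case B' : e ≤ t ≤ s
        have hes : e ≤ s := le_trans het hts
        have eqB' : (Φ t e).comp ((1 - Q).comp (Φ e s)) =
            (Φ t s).comp (1 - Pp s) -
              ((Φ t e).comp (Pp e)).comp (Q.comp ((1 - Pp e).comp (Φ e s))) := by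
          refine ContinuousLinearMap.ext fun v => ?_
          simp only [ContinuousLinearMap.comp_apply, ContinuousLinearMap.sub_apply,
            ContinuousLinearMap.one_apply]
          have hv : Φ s e (Φ e s v) = v := by rw [φap s hs e heJ s hs, φid s hs]
          have h1 : (Pp s) v = Φ s e ((Pp e) (Φ e s v)) := by
            conv_lhs => rw [← hv]
            rw [cpw s hes e le_rfl]
          have h2 : Φ t s v = Φ t e (Φ e s v) := by
            conv_lhs => rw [← hv]
            rw [φap t ht s hs e heJ]
          rw [h1]
          simp only [map_sub, q5, q2, pidp]
          rw [φap t ht s hs e heJ, h2]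
          abel
        rw [eqB']
        have n1 : ‖(Φ t s).comp (1 - Pp s)‖ ≤ Kp * (h s / h t) ^ (-αp) :=
          hbp t het s hes hts
        have n1' : ‖(Φ t s).comp (1 - Pp s)‖ ≤ Kp * (h s / h t) ^ (-α) :=
          le_trans n1 (mul_le_mul_of_nonneg_left
            (Real.rpow_le_rpow_of_exponent_le hrat1 (by linarith : -αp ≤ -α)) hKp0.le)
        have n2 : ‖((Φ t e).comp (Pp e)).comp (Q.comp ((1 - Pp e).comp (Φ e s)))‖
            ≤ (Kp * (h t) ^ (-αp)) * (nQ * (Kp * (h s) ^ (-αp))) := by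
          refine le_trans (norm_comp3 _ _ _) ?_
          have hb3 := b3 t ht het
          have hb4 := b4 s hs hes
          have h5 : ‖Q‖ * ‖(1 - Pp e).comp (Φ e s)‖ ≤ nQ * (Kp * (h s) ^ (-αp)) :=
            mul_le_mul_of_nonneg_left hb4 hnQ
          exact mul_le_mul hb3 h5 (mul_nonneg (norm_nonneg _) (norm_nonneg _))
            (mul_nonneg hKp0.le (Real.rpow_nonneg (hpos t ht).le _))
        have hbb := prod_aux_B' (h_ge1 t ht het) hhts hα0 hααp
        have n2' : ‖((Φ t e).comp (Pp e)).comp (Q.comp ((1 - Pp e).comp (Φ e s)))‖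
            ≤ (Kp * (nQ * Kp)) * (h s / h t) ^ (-α) := by
          calc ‖((Φ t e).comp (Pp e)).comp (Q.comp ((1 - Pp e).comp (Φ e s)))‖
              ≤ (Kp * (h t) ^ (-αp)) * (nQ * (Kp * (h s) ^ (-αp))) := n2
            _ = (Kp * (nQ * Kp)) * ((h t) ^ (-αp) * (h s) ^ (-αp)) := by ring
            _ ≤ (Kp * (nQ * Kp)) * (h s / h t) ^ (-α) := by
                apply mul_le_mul_of_nonneg_left hbb
                exact mul_nonneg hKp0.le (mul_nonneg hnQ hKp0.le)
        calc ‖(Φ t s).comp (1 - Pp s) -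
              ((Φ t e).comp (Pp e)).comp (Q.comp ((1 - Pp e).comp (Φ e s)))‖
            ≤ ‖(Φ t s).comp (1 - Pp s)‖ +
              ‖((Φ t e).comp (Pp e)).comp (Q.comp ((1 - Pp e).comp (Φ e s)))‖ :=
              norm_sub_le _ _
          _ ≤ Kp * (h s / h t) ^ (-α) + (Kp * (nQ * Kp)) * (h s / h t) ^ (-α) := by
              linarith
          _ = Mp * (h s / h t) ^ (-α) := by rw [hMpdef]; ring
          _ ≤ K * (h s / h t) ^ (-α) := by
              apply mul_le_mul_of_nonneg_right _ hrat0
              rw [hKdef]; linarith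
      · rcases le_total s e with hse | hes
        · -- case A' : t ≤ s ≤ e
          have eqA' : (Φ t e).comp ((1 - Q).comp (Φ e s)) =
              ((Φ t s).comp (1 - Pm s)).comp (1 - (Φ s e).comp (Q.comp (Φ e s))) := by
            refine ContinuousLinearMap.ext fun v => ?_
            simp only [ContinuousLinearMap.comp_apply, ContinuousLinearMap.sub_apply,
              ContinuousLinearMap.one_apply]
            have hv : Φ s e (Φ e s v) = v := by rw [φap s hs e heJ s hs, φid s hs]
            have h4 : (Pm s) (v - Φ s e (Q (Φ e s v))) =
                Φ s e ((Pm e) (Φ e s v - Q (Φ e s v))) := by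
              conv_lhs => rw [← hv, ← map_sub (Φ s e)]
              rw [cmw s hs hse e heJ le_rfl, φap e heJ s hs e heJ, φid e heJ]
            rw [h4, q4, map_zero, sub_zero]
            conv_rhs => rw [← hv, ← map_sub (Φ s e), φap t ht s hs e heJ]
            rw [map_sub, φap e heJ s hs e heJ, φid e heJ]
            rw [map_sub]
          rw [eqA']
          have n1 : ‖(Φ t s).comp (1 - Pm s)‖ ≤ Km * (h s / h t) ^ (-αm) :=
            hbm t ⟨ht, le_trans hts hse⟩ s ⟨hs, hse⟩ hts
          have n1' : ‖(Φ t s).comp (1 - Pm s)‖ ≤ Km * (h s / h t) ^ (-α) :=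
            le_trans n1 (mul_le_mul_of_nonneg_left
              (Real.rpow_le_rpow_of_exponent_le hrat1 (by linarith : -αm ≤ -α)) hKm0.le)
          have n2 : ‖1 - (Φ s e).comp (Q.comp (Φ e s))‖ ≤ 1 + Mm := by
            calc ‖1 - (Φ s e).comp (Q.comp (Φ e s))‖
                ≤ ‖(1 : (Fin n → ℝ) →L[ℝ] (Fin n → ℝ))‖ + ‖(Φ s e).comp (Q.comp (Φ e s))‖ :=
                  norm_sub_le _ _
              _ ≤ 1 + Mm := add_le_add ContinuousLinearMap.norm_id_le (hMmB s hs hse)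
          calc ‖((Φ t s).comp (1 - Pm s)).comp (1 - (Φ s e).comp (Q.comp (Φ e s)))‖
              ≤ ‖(Φ t s).comp (1 - Pm s)‖ * ‖1 - (Φ s e).comp (Q.comp (Φ e s))‖ :=
                ContinuousLinearMap.opNorm_comp_le _ _
            _ ≤ (Km * (h s / h t) ^ (-α)) * (1 + Mm) := by
                apply mul_le_mul n1' n2 (norm_nonneg _)
                exact mul_nonneg hKm0.le hrat0
            _ = (Km * (1 + Mm)) * (h s / h t) ^ (-α) := by ring
            _ ≤ K * (h s / h t) ^ (-α) := by
                apply mul_le_mul_of_nonneg_right _ hrat0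
                rw [hKdef]; linarith
        · -- case C' : t ≤ e ≤ s
          have eqC' : (Φ t e).comp ((1 - Q).comp (Φ e s)) =
              ((Φ t e).comp (1 - Pm e)).comp ((1 - Q).comp ((1 - Pp e).comp (Φ e s))) := by
            refine ContinuousLinearMap.ext fun v => ?_
            simp only [ContinuousLinearMap.comp_apply, ContinuousLinearMap.sub_apply,
              ContinuousLinearMap.one_apply]
            have h1 : Q (Φ e s v - (Pp e) (Φ e s v)) = Q (Φ e s v) - (Pp e) (Φ e s v) := by
              rw [map_sub, q5]
            rw [h1]
            have h2 : (Pm e) ((Φ e s v - (Pp e) (Φ e s v)) -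
                (Q (Φ e s v) - (Pp e) (Φ e s v))) = 0 := by
              have : (Φ e s v - (Pp e) (Φ e s v)) - (Q (Φ e s v) - (Pp e) (Φ e s v)) =
                  Φ e s v - Q (Φ e s v) := by abel
              rw [this]
              exact q4 _
            rw [h2, sub_zero]
            congr 1
            abel
          rw [eqC']
          have n1 : ‖((Φ t e).comp (1 - Pm e)).comp ((1 - Q).comp ((1 - Pp e).comp (Φ e s)))‖
              ≤ (Km * (h t) ^ αm) * (nQ' * (Kp * (h s) ^ (-αp))) := by
            refine le_trans (norm_comp3 _ _ _) ?_
            have hb2 := b2 t ht hte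
            have hb4 := b4 s hs hes
            have h5 : ‖(1:(Fin n → ℝ) →L[ℝ] (Fin n → ℝ)) - Q‖ * ‖(1 - Pp e).comp (Φ e s)‖
                ≤ nQ' * (Kp * (h s) ^ (-αp)) := mul_le_mul_of_nonneg_left hb4 hnQ'
            exact mul_le_mul hb2 h5 (mul_nonneg (norm_nonneg _) (norm_nonneg _))
              (mul_nonneg hKm0.le (Real.rpow_nonneg (hpos t ht).le _))
          have hcc := prod_aux_C' (hpos t ht) (h_le1 t ht hte) (h_ge1 s hs hes) hα0 hααm hααp
          calc ‖((Φ t e).comp (1 - Pm e)).comp ((1 - Q).comp ((1 - Pp e).comp (Φ e s)))‖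
              ≤ (Km * (h t) ^ αm) * (nQ' * (Kp * (h s) ^ (-αp))) := n1
            _ = (Km * (nQ' * Kp)) * ((h t) ^ αm * (h s) ^ (-αp)) := by ring
            _ ≤ (Km * (nQ' * Kp)) * (h s / h t) ^ (-α) :=
                mul_le_mul_of_nonneg_left hcc hcC'0
            _ ≤ K * (h s / h t) ^ (-α) := by
                apply mul_le_mul_of_nonneg_right _ hrat0
                rw [hKdef]; linarith
end

section
/- The scalar equation x' = a(t)x on (0,∞), where a(t) = 1/t for 0 < t ≤ 1−ℓ, a(t) = −1/t for t ≥ 1+ℓ, and a is continuous on [1−ℓ, 1+ℓ] (ℓ ∈ (0,1)), has a uniform h-dichotomy with h(t) = t on (0, 1−ℓ) (with projector P = 0) and on (1+ℓ, ∞) (with projector P = 1), yet has no uniform h-dichotomy on all of (0,∞), since every solution is bounded on (0,∞). -/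
open intervalIntegral

/-- The transition "matrix" (scalar) of `x' = a(t)x`:
`Φ(t,s) = exp(∫ₛᵗ a(u) du)`. -/
noncomputable def scalarPhi (a : ℝ → ℝ) (t s : ℝ) : ℝ :=
  Real.exp (∫ u in s..t, a u)

lemma myint_low {a : ℝ → ℝ} {c : ℝ} (h : ∀ u : ℝ, 0 < u → u ≤ c → a u = 1 / u)
    {s t : ℝ} (hs : 0 < s) (ht : 0 < t) (hsc : s ≤ c) (htc : t ≤ c) :
    ∫ u in s..t, a u = Real.log (t / s) := by
  rw [intervalIntegral.integral_congr (g := fun u : ℝ => u⁻¹)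
      (fun u hu => by
        have hu0 : 0 < u := lt_of_lt_of_le (lt_min hs ht) hu.1
        have huc : u ≤ c := le_trans hu.2 (max_le hsc htc)
        simp [h u hu0 huc, one_div])]
  exact integral_inv (fun hmem => absurd hmem.1 (not_le.mpr (lt_min hs ht)))

lemma myint_high {a : ℝ → ℝ} {d : ℝ} (h : ∀ u : ℝ, d ≤ u → a u = -(1 / u))
    (hd : 0 < d) {s t : ℝ} (hds : d ≤ s) (hdt : d ≤ t) :
    ∫ u in s..t, a u = Real.log (s / t) := by
  have hs : 0 < s := lt_of_lt_of_le hd hds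
  have ht : 0 < t := lt_of_lt_of_le hd hdt
  rw [intervalIntegral.integral_congr (g := fun u : ℝ => -(u⁻¹))
      (fun u hu => by
        have hud : d ≤ u := le_trans (le_min hds hdt) hu.1
        simp [h u hud, one_div])]
  rw [intervalIntegral.integral_neg, integral_inv
    (fun hmem => absurd hmem.1 (not_le.mpr (lt_min hs ht)))]
  rw [← Real.log_inv, inv_div]

/-- the scalar equation `x' = a(t)x` on `(0,∞)` with
`a(t) = 1/t` on `(0,1-ℓ]`, `a(t) = -1/t` on `[1+ℓ,∞)` and `a` continuous,
has uniform `h`-dichotomies (with `h(t) = t`) on `(0,1-ℓ)` (projector `P = 0`)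
and on `(1+ℓ,∞)` (projector `P = 1`), yet every solution is bounded on
`(0,∞)` and hence there is no uniform `h`-dichotomy on all of `(0,∞)`. -/
theorem scalar_example_no_full_dichotomy
    (ℓ : ℝ) (hℓ0 : 0 < ℓ) (hℓ1 : ℓ < 1)
    (a : ℝ → ℝ) (hacont : ContinuousOn a (Set.Ioi 0))
    (ha1 : ∀ t : ℝ, 0 < t → t ≤ 1 - ℓ → a t = 1 / t)
    (ha2 : ∀ t : ℝ, 1 + ℓ ≤ t → a t = -(1 / t)) :
    -- uniform h-dichotomy on (0, 1-ℓ) with projector P = 0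
    (∃ K α : ℝ, 1 ≤ K ∧ 0 < α ∧
      ∀ t s : ℝ, 0 < t → t ≤ s → s < 1 - ℓ →
        |scalarPhi a t s| ≤ K * (s / t) ^ (-α)) ∧
    -- uniform h-dichotomy on (1+ℓ, ∞) with projector P = 1
    (∃ K α : ℝ, 1 ≤ K ∧ 0 < α ∧
      ∀ t s : ℝ, 1 + ℓ < s → s ≤ t →
        |scalarPhi a t s| ≤ K * (t / s) ^ (-α)) ∧
    -- every solution is bounded on (0,∞)
    (∀ t₀ x₀ : ℝ, 0 < t₀ → ∃ C : ℝ, ∀ t : ℝ, 0 < t →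
      |scalarPhi a t t₀ * x₀| ≤ C) ∧
    -- no uniform h-dichotomy on all of (0,∞)
    ¬ (∃ P K α : ℝ, P * P = P ∧ 1 ≤ K ∧ 0 < α ∧
        (∀ t s : ℝ, 0 < s → s ≤ t →
          |scalarPhi a t s * P| ≤ K * (t / s) ^ (-α)) ∧
        (∀ t s : ℝ, 0 < t → t ≤ s →
          |scalarPhi a t s * (1 - P)| ≤ K * (s / t) ^ (-α))) := by
  have hc : (0:ℝ) < 1 - ℓ := by linarith
  have hd : (0:ℝ) < 1 + ℓ := by linarith
  have hint : ∀ p q : ℝ, 0 < p → 0 < q →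
      IntervalIntegrable a MeasureTheory.volume p q := by
    intro p q hp hq
    apply ContinuousOn.intervalIntegrable
    apply hacont.mono
    intro x hx
    exact lt_of_lt_of_le (lt_min hp hq) hx.1
  refine ⟨?_, ?_, ?_, ?_⟩
  · -- dichotomy on (0, 1-ℓ)
    refine ⟨1, 1, le_refl 1, one_pos, ?_⟩
    intro t s ht hts hs
    have hs0 : 0 < s := lt_of_lt_of_le ht hts
    have heq : scalarPhi a t s = t / s := by
      rw [scalarPhi, myint_low ha1 hs0 ht hs.le (hts.trans hs.le),
        Real.exp_log (div_pos ht hs0)]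
    rw [heq, Real.rpow_neg_one, one_mul, inv_div,
      abs_of_pos (div_pos ht hs0)]
  · -- dichotomy on (1+ℓ, ∞)
    refine ⟨1, 1, le_refl 1, one_pos, ?_⟩
    intro t s hs hst
    have hs0 : 0 < s := lt_trans hd hs
    have ht0 : 0 < t := lt_of_lt_of_le hs0 hst
    have heq : scalarPhi a t s = s / t := by
      rw [scalarPhi, myint_high ha2 hd hs.le (hs.le.trans hst),
        Real.exp_log (div_pos hs0 ht0)]
    rw [heq, Real.rpow_neg_one, one_mul, inv_div,
      abs_of_pos (div_pos hs0 ht0)]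
  · -- boundedness of all solutions
    intro t₀ x₀ ht₀
    obtain ⟨M, hM⟩ := (isCompact_Icc (a := 1 - ℓ) (b := 1 + ℓ)).exists_bound_of_continuousOn
      (hacont.mono (fun x hx => lt_of_lt_of_le hc hx.1))
    set M' : ℝ := max M 0 with hM'def
    have hM'0 : 0 ≤ M' := le_max_right _ _
    have hMbd : ∀ x ∈ Set.Icc (1 - ℓ) (1 + ℓ), ‖a x‖ ≤ M' :=
      fun x hx => le_trans (hM x hx) (le_max_left _ _)
    have hmid : ∀ p q : ℝ, 1 - ℓ ≤ p → q ≤ 1 + ℓ → p ≤ q →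
        (∫ u in p..q, a u) ≤ M' * (2 * ℓ) := by
      intro p q hp hq hpq
      have hb : ‖∫ u in p..q, a u‖ ≤ M' * |q - p| := by
        apply intervalIntegral.norm_integral_le_of_norm_le_const
        intro x hx
        rw [Set.uIoc_of_le hpq] at hx
        exact hMbd x ⟨le_trans hp hx.1.le, le_trans hx.2 hq⟩
      have h1 : (∫ u in p..q, a u) ≤ M' * |q - p| :=
        le_trans (le_abs_self _) hb
      have h2 : |q - p| ≤ 2 * ℓ := by
        rw [abs_of_nonneg (by linarith)]; linarith
      calc (∫ u in p..q, a u) ≤ M' * |q - p| := h1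
        _ ≤ M' * (2 * ℓ) := by
            exact mul_le_mul_of_nonneg_left h2 hM'0
    have key : ∀ t : ℝ, 0 < t → (∫ u in (1-ℓ)..t, a u) ≤ M' * (2 * ℓ) := by
      intro t ht
      rcases le_or_gt t (1 - ℓ) with h1 | h1
      · rw [myint_low ha1 hc ht (le_refl _) h1]
        have : Real.log (t / (1 - ℓ)) ≤ 0 :=
          Real.log_nonpos (by positivity) (by
            rw [div_le_one hc]; exact h1)
        nlinarith
      · rcases le_or_gt t (1 + ℓ) with h2 | h2
        · exact hmid _ _ (le_refl _) h2 h1.le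
        · rw [← intervalIntegral.integral_add_adjacent_intervals
            (hint (1-ℓ) (1+ℓ) hc hd) (hint (1+ℓ) t hd ht)]
          have hA : (∫ u in (1-ℓ)..(1+ℓ), a u) ≤ M' * (2 * ℓ) :=
            hmid _ _ (le_refl _) (le_refl _) (by linarith)
          have hB : (∫ u in (1+ℓ)..t, a u) ≤ 0 := by
            rw [myint_high ha2 hd (le_refl _) h2.le]
            exact Real.log_nonpos (by positivity) (by
              rw [div_le_one ht]; exact h2.le)
          linarith
    set A : ℝ := ∫ u in t₀..(1-ℓ), a u with hA
    refine ⟨Real.exp (A + M' * (2 * ℓ)) * |x₀|, ?_⟩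
    intro t ht
    have hsplit : (∫ u in t₀..t, a u) = A + ∫ u in (1-ℓ)..t, a u := by
      rw [hA, intervalIntegral.integral_add_adjacent_intervals
        (hint t₀ (1-ℓ) ht₀ hc) (hint (1-ℓ) t hc ht)]
    rw [abs_mul, scalarPhi, abs_of_pos (Real.exp_pos _)]
    have : Real.exp (∫ u in t₀..t, a u) ≤ Real.exp (A + M' * (2 * ℓ)) := by
      apply Real.exp_le_exp.mpr
      rw [hsplit]
      linarith [key t ht]
    exact mul_le_mul_of_nonneg_right this (abs_nonneg _)
  · -- no dichotomy on (0,∞)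
    rintro ⟨P, K, α, hPP, hK, hα, h1, h2⟩
    have hKpos : (0:ℝ) < K + 1 := by linarith
    have hP01 : P = 0 ∨ P = 1 := by
      have h : P * (P - 1) = 0 := by linear_combination hPP
      rcases mul_eq_zero.mp h with h | h
      · exact Or.inl h
      · exact Or.inr (by linarith)
    have hrpow : (K + 1 : ℝ) ^ (-α) ≤ 1 :=
      Real.rpow_le_one_of_one_le_of_nonpos (by linarith) (by linarith)
    rcases hP01 with hP | hP
    · -- P = 0 : use the second estimate at t = 1+ℓ, s = (1+ℓ)(K+1)
      have hs0 : 0 < (1 + ℓ) * (K + 1) := by positivity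
      have hts : 1 + ℓ ≤ (1 + ℓ) * (K + 1) := by nlinarith
      have hdivision : ((1 + ℓ) * (K + 1)) / (1 + ℓ) = K + 1 := by
        field_simp
      have h := h2 (1 + ℓ) ((1 + ℓ) * (K + 1)) hd hts
      have heq : scalarPhi a (1 + ℓ) ((1 + ℓ) * (K + 1)) = K + 1 := by
        rw [scalarPhi, myint_high ha2 hd hts (le_refl _), hdivision,
          Real.exp_log hKpos]
      rw [heq, hP, sub_zero, mul_one, abs_of_pos hKpos, hdivision] at h
      nlinarith [Real.rpow_nonneg (le_of_lt hKpos) (-α)]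
    · -- P = 1 : use the first estimate at t = 1-ℓ, s = (1-ℓ)/(K+1)
      have hs0 : 0 < (1 - ℓ) / (K + 1) := by positivity
      have hst : (1 - ℓ) / (K + 1) ≤ 1 - ℓ := by
        rw [div_le_iff₀ hKpos]; nlinarith
      have h := h1 (1 - ℓ) ((1 - ℓ) / (K + 1)) hs0 hst
      have heq : scalarPhi a (1 - ℓ) ((1 - ℓ) / (K + 1)) = K + 1 := by
        rw [scalarPhi, myint_low ha1 hs0 hc hst (le_refl _)]
        have : (1 - ℓ) / ((1 - ℓ) / (K + 1)) = K + 1 := by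
          field_simp
        rw [this, Real.exp_log hKpos]
      rw [heq, hP, mul_one, abs_of_pos hKpos] at h
      have hdivision : (1 - ℓ) / ((1 - ℓ) / (K + 1)) = K + 1 := by
        field_simp
      rw [hdivision] at h
      nlinarith [Real.rpow_nonneg (le_of_lt hKpos) (-α)]
end

section
/- Suppose x' = A(t)x satisfies the generalized Floquet condition (d/dt)(t*T) · A(t*T) = A(t) for all t ∈ J, where T > e and t*T = h⁻¹(h(t)h(T)) for a differentiable growth rate h. If Φ(t) is a fundamental matrix of the system, then Ψ(t) := Φ(t*T) is also a fundamental matrix; consequently there is an invertible matrix V with Φ(t*T) = Φ(t)V for all t, and Φ(t*T^{*n}) = Φ(t)Vⁿ for all n ∈ ℕ. -/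
/-- The group operation induced by a growth rate `h` with inverse `hinv`. -/
noncomputable def grOp (h hinv : ℝ → ℝ) (t s : ℝ) : ℝ := hinv (h t * h s)

/-- `k`-fold group power of `t` (natural number case), identity `hinv 1`. -/
noncomputable def gpowNat (h hinv : ℝ → ℝ) (t : ℝ) : ℕ → ℝ
  | 0 => hinv 1
  | (k + 1) => grOp h hinv t (gpowNat h hinv t k)

private lemma det_diffAt {m : ℕ} (M : ℝ → Matrix (Fin m) (Fin m) ℝ) (t : ℝ)
    (hM : ∀ i j, DifferentiableAt ℝ (fun τ => M τ i j) t) :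
    DifferentiableAt ℝ (fun τ => (M τ).det) t := by
  simp only [Matrix.det_apply']
  exact DifferentiableAt.fun_sum fun σ _ =>
    (DifferentiableAt.fun_finsetProd fun i _ => hM (σ i) i).const_mul _

private lemma inv_entry_diffAt {m : ℕ} (M : ℝ → Matrix (Fin m) (Fin m) ℝ) (t : ℝ)
    (hM : ∀ i j, DifferentiableAt ℝ (fun τ => M τ i j) t)
    (hdet : (M t).det ≠ 0) (i j : Fin m) :
    DifferentiableAt ℝ (fun τ => (M τ)⁻¹ i j) t := by
  have h1 : ∀ τ, (M τ)⁻¹ i j = ((M τ).det)⁻¹ * (M τ).adjugate i j := by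
    intro τ
    rw [Matrix.inv_def, Matrix.smul_apply, Ring.inverse_eq_inv', smul_eq_mul]
  simp only [h1]
  have hadj : DifferentiableAt ℝ (fun τ => (M τ).adjugate i j) t := by
    simp only [Matrix.adjugate_apply]
    apply det_diffAt
    intro a b
    simp only [Matrix.updateRow_apply]
    by_cases hab : a = j
    · simp [hab]
    · simpa [hab] using hM a b
  exact ((det_diffAt M t hM).inv hdet).mul hadj

private lemma mul_entry_hasDerivAt {m : ℕ} {M N : ℝ → Matrix (Fin m) (Fin m) ℝ}
    {M' N' : Matrix (Fin m) (Fin m) ℝ} {t : ℝ}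
    (hM : ∀ i j, HasDerivAt (fun τ => M τ i j) (M' i j) t)
    (hN : ∀ i j, HasDerivAt (fun τ => N τ i j) (N' i j) t)
    (i j : Fin m) :
    HasDerivAt (fun τ => (M τ * N τ) i j) ((M' * N t + M t * N') i j) t := by
  simp only [Matrix.mul_apply, Matrix.add_apply]
  rw [← Finset.sum_add_distrib]
  exact HasDerivAt.fun_sum fun k _ => (hM i k).mul (hN k j)
/-- under the generalized Floquet condition
`(t*T)' A(t*T) = A(t)` (with `T > e`, `t*T = h⁻¹(h(t)h(T))`, `h` a
differentiable growth rate), if `Φ` is a fundamental matrix then so is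
`Ψ(t) = Φ(t*T)`; consequently there is an invertible monodromy matrix `V` with
`Φ(t*T) = Φ(t)V` and `Φ(t*T^{*n}) = Φ(t)Vⁿ` for all `n ∈ ℕ`. -/
theorem floquet_fundamental_monodromy
    (n : ℕ) (a₀ : EReal) (J : Set ℝ) (hJ : J = {t : ℝ | a₀ < (t : EReal)})
    (h hinv h' : ℝ → ℝ)
    (hmono : StrictMonoOn h J) (hmaps : Set.MapsTo h J (Set.Ioi 0))
    (hinv_mem : ∀ x : ℝ, 0 < x → hinv x ∈ J)
    (hright : ∀ x : ℝ, 0 < x → h (hinv x) = x)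
    (hleft : ∀ t ∈ J, hinv (h t) = t)
    (hdiff : ∀ t ∈ J, HasDerivAt h (h' t) t)
    (T : ℝ) (hTJ : T ∈ J) (hTe : hinv 1 < T)
    (A : ℝ → Matrix (Fin n) (Fin n) ℝ)
    (f f' : ℝ → ℝ) (hf : ∀ t : ℝ, f t = grOp h hinv t T)
    (hfd : ∀ t ∈ J, HasDerivAt f (f' t) t)
    (hFloq : ∀ t ∈ J, f' t • A (f t) = A t)
    (Φ : ℝ → Matrix (Fin n) (Fin n) ℝ)
    (hΦinv : ∀ t ∈ J, IsUnit (Φ t))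
    (hΦd : ∀ t ∈ J, ∀ i j, HasDerivAt (fun τ => Φ τ i j) ((A t * Φ t) i j) t) :
    -- Ψ(t) = Φ(t*T) is also a fundamental matrix
    (∀ t ∈ J, (∀ i j, HasDerivAt (fun τ => Φ (f τ) i j) ((A t * Φ (f t)) i j) t) ∧
      IsUnit (Φ (f t))) ∧
    -- the monodromy matrix
    (∃ V : Matrix (Fin n) (Fin n) ℝ, IsUnit V ∧
      (∀ t ∈ J, Φ (f t) = Φ t * V) ∧
      (∀ k : ℕ, ∀ t ∈ J, Φ (grOp h hinv t (gpowNat h hinv T k)) = Φ t * V ^ k)) := by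
  -- basic topology/geometry of J
  have hJopen : IsOpen J := by
    rw [hJ]
    exact isOpen_Ioi.preimage continuous_coe_real_ereal
  have hconv : Convex ℝ J := by
    apply Set.OrdConnected.convex
    constructor
    intro x hx y hy z hz
    rw [hJ] at hx ⊢
    exact lt_of_lt_of_le hx (EReal.coe_le_coe_iff.mpr hz.1)
  -- positivity of h on J
  have hpos : ∀ t ∈ J, 0 < h t := fun t ht => hmaps ht
  have hdetne : ∀ t ∈ J, (Φ t).det ≠ 0 := fun t ht =>
    ((Matrix.isUnit_iff_isUnit_det _).mp (hΦinv t ht)).ne_zero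
  have hfJ : ∀ t ∈ J, f t ∈ J := by
    intro t ht
    rw [hf]
    exact hinv_mem _ (mul_pos (hpos t ht) (hpos T hTJ))
  -- Part 1: Ψ(t) = Φ(f t) is a fundamental matrix
  have hΨd : ∀ t ∈ J, ∀ i j,
      HasDerivAt (fun τ => Φ (f τ) i j) ((A t * Φ (f t)) i j) t := by
    intro t ht i j
    have hc := (hΦd (f t) (hfJ t ht) i j).comp t (hfd t ht)
    refine hc.congr_deriv ?_
    rw [← hFloq t ht, Matrix.smul_mul, Matrix.smul_apply, smul_eq_mul, mul_comm]
  -- derivative of entries of Φ⁻¹ : value is -(Φ⁻¹ A)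
  have hPder : ∀ t ∈ J, ∀ i j,
      HasDerivAt (fun τ => (Φ τ)⁻¹ i j) ((-((Φ t)⁻¹ * A t)) i j) t := by
    intro t ht
    have hent : ∀ i j, DifferentiableAt ℝ (fun τ => Φ τ i j) t :=
      fun i j => (hΦd t ht i j).differentiableAt
    have hdiffinv : ∀ i j, DifferentiableAt ℝ (fun τ => (Φ τ)⁻¹ i j) t :=
      fun i j => inv_entry_diffAt Φ t hent (hdetne t ht) i j
    set q : Matrix (Fin n) (Fin n) ℝ :=
      Matrix.of (fun i j => deriv (fun τ => (Φ τ)⁻¹ i j) t) with hqdef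
    have hq : ∀ i j, HasDerivAt (fun τ => (Φ τ)⁻¹ i j) (q i j) t :=
      fun i j => (hdiffinv i j).hasDerivAt
    -- differentiate Φ⁻¹ * Φ = 1 near t
    have hprod : ∀ i j, HasDerivAt (fun τ => ((Φ τ)⁻¹ * Φ τ) i j)
        ((q * Φ t + (Φ t)⁻¹ * (A t * Φ t)) i j) t :=
      fun i j => mul_entry_hasDerivAt hq (hΦd t ht) i j
    have hev : ∀ i j, (fun τ => ((Φ τ)⁻¹ * Φ τ) i j) =ᶠ[nhds t]
        (fun _ => (1 : Matrix (Fin n) (Fin n) ℝ) i j) := by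
      intro i j
      filter_upwards [hJopen.mem_nhds ht] with τ hτ
      rw [Matrix.nonsing_inv_mul _ ((Matrix.isUnit_iff_isUnit_det _).mp (hΦinv τ hτ))]
    have hzero : q * Φ t + (Φ t)⁻¹ * (A t * Φ t) = 0 := by
      ext i j
      have h1 : HasDerivAt (fun τ => ((Φ τ)⁻¹ * Φ τ) i j) 0 t :=
        hasDerivAt_const t _ |>.congr_of_eventuallyEq (hev i j)
      simpa using (hprod i j).unique h1
    have hqeq : q = -((Φ t)⁻¹ * A t) := by
      have h2 : q * Φ t = -((Φ t)⁻¹ * A t * Φ t) := by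
        rw [← mul_assoc] at hzero
        exact eq_neg_of_add_eq_zero_left hzero
      calc q = q * (Φ t * (Φ t)⁻¹) := by
              rw [Matrix.mul_nonsing_inv _ ((Matrix.isUnit_iff_isUnit_det _).mp (hΦinv t ht)),
                mul_one]
        _ = q * Φ t * (Φ t)⁻¹ := by rw [mul_assoc]
        _ = -((Φ t)⁻¹ * A t * Φ t) * (Φ t)⁻¹ := by rw [h2]
        _ = -((Φ t)⁻¹ * A t) := by
              rw [neg_mul, mul_assoc, Matrix.mul_nonsing_inv _
                ((Matrix.isUnit_iff_isUnit_det _).mp (hΦinv t ht)), mul_one]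
    intro i j
    rw [← hqeq]
    exact hq i j
  -- the function g τ = Φ(τ)⁻¹ * Φ(f τ) has zero derivative on J
  have hgd : ∀ t ∈ J, ∀ i j,
      HasDerivAt (fun τ => ((Φ τ)⁻¹ * Φ (f τ)) i j) 0 t := by
    intro t ht i j
    have hm := mul_entry_hasDerivAt (hPder t ht)
      (fun i j => hΨd t ht i j) i j
    have : (-((Φ t)⁻¹ * A t) * Φ (f t) + (Φ t)⁻¹ * (A t * Φ (f t)))
        = (0 : Matrix (Fin n) (Fin n) ℝ) := by
      rw [neg_mul, mul_assoc, neg_add_cancel]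
    rw [this] at hm
    simpa using hm
  -- g is constant on J
  have hgconst : ∀ t ∈ J, (Φ t)⁻¹ * Φ (f t) = (Φ T)⁻¹ * Φ (f T) := by
    intro t ht
    ext i j
    apply hconv.is_const_of_fderivWithin_eq_zero (𝕜 := ℝ)
      (f := fun τ => ((Φ τ)⁻¹ * Φ (f τ)) i j)
    · intro x hx
      exact ((hgd x hx i j).differentiableAt).differentiableWithinAt
    · intro x hx
      have h0 : HasFDerivAt (fun τ => ((Φ τ)⁻¹ * Φ (f τ)) i j)
          (0 : ℝ →L[ℝ] ℝ) x := by
        have := (hgd x hx i j).hasFDerivAt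
        refine this.congr_fderiv ?_
        ext y
        simp
      exact h0.hasFDerivWithinAt.fderivWithin (hJopen.uniqueDiffWithinAt hx)
    · exact ht
    · exact hTJ
  set V : Matrix (Fin n) (Fin n) ℝ := (Φ T)⁻¹ * Φ (f T) with hVdef
  have hmonod : ∀ t ∈ J, Φ (f t) = Φ t * V := by
    intro t ht
    have := hgconst t ht
    calc Φ (f t) = (Φ t * (Φ t)⁻¹) * Φ (f t) := by
          rw [Matrix.mul_nonsing_inv _ ((Matrix.isUnit_iff_isUnit_det _).mp (hΦinv t ht)),
            one_mul]
      _ = Φ t * ((Φ t)⁻¹ * Φ (f t)) := by rw [mul_assoc]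
      _ = Φ t * V := by rw [this]
  have hVunit : IsUnit V := by
    rw [Matrix.isUnit_iff_isUnit_det, isUnit_iff_ne_zero]
    have h1 := hmonod T hTJ
    have h2 : (Φ (f T)).det = (Φ T).det * V.det := by rw [h1, Matrix.det_mul]
    intro hc
    exact hdetne (f T) (hfJ T hTJ) (by rw [h2, hc, mul_zero])
  refine ⟨fun t ht => ⟨hΨd t ht, hΦinv (f t) (hfJ t ht)⟩, V, hVunit, hmonod, ?_⟩
  -- powers
  have hgpowJ : ∀ k : ℕ, gpowNat h hinv T k ∈ J := by
    intro k
    induction k with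
    | zero => exact hinv_mem 1 one_pos
    | succ k ih =>
      exact hinv_mem _ (mul_pos (hpos T hTJ) (hpos _ ih))
  intro k
  induction k with
  | zero =>
    intro t ht
    have : grOp h hinv t (gpowNat h hinv T 0) = t := by
      show hinv (h t * h (hinv 1)) = t
      rw [hright 1 one_pos, mul_one, hleft t ht]
    rw [this, pow_zero, mul_one]
  | succ k ih =>
    intro t ht
    set u := grOp h hinv t (gpowNat h hinv T k) with hu
    have huJ : u ∈ J := hinv_mem _ (mul_pos (hpos t ht) (hpos _ (hgpowJ k)))
    have key : grOp h hinv t (gpowNat h hinv T (k + 1)) = f u := by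
      rw [hf u, hu]
      show hinv (h t * h (hinv (h T * h (gpowNat h hinv T k))))
        = hinv (h (hinv (h t * h (gpowNat h hinv T k))) * h T)
      rw [hright _ (mul_pos (hpos T hTJ) (hpos _ (hgpowJ k))),
        hright _ (mul_pos (hpos t ht) (hpos _ (hgpowJ k)))]
      ring_nf
    rw [key, hmonod u huJ, ih t ht, pow_succ, mul_assoc]
end
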